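/- arXiv:2308.13882 — 8 statements merged into one kernel-verified Lean document; each statement's English description precedes it below -/
import Mathlib

section
/- Every even binary word is a cyclic shuffle square: if W is a binary word in which each of the two letters occurs an even number of times, then W can be split into two disjoint subwords A and B of equal length such that A is a cyclic shift of B. -/
inductive Interleave {α : Type*} : List α → List α → List α → Prop
  | nil : Interleave [] [] []
  | left {a : α} {l₁ l₂ l : List α} : Interleave l₁ l₂ l → Interleave (a :: l₁) l₂ (a :: l)
  | right {a : α} {l₁ l₂ l : List α} : Interleave l₁ l₂ l → Interleave l₁ (a :: l₂) (a :: l)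

def IsShuffleSquare {α : Type*} (W : List α) : Prop := ∃ U, Interleave U U W

/-!
Let `W` contain `2z` zeros and `2o` ones, so `|W| = 2n` with `n = z + o`. Sliding a window of
length `n` along `W` changes its number of ones by at most one, and the windows at `0` and `n`
together contain all `2o` ones, so by discrete continuity some window `M` contains exactly `o`
ones and `z` zeros. Write `W = P M S`, let `A` consist of the zeros of `P`, the ones of `M` and the
zeros of `S`, and `B` of the remaining letters. Then `A = 0^p 1^o 0^s` and `B = 1^p' 0^z 1^s'` with
`p + s = z` and `p' + s' = o`, so `B = (1^p' 0^s)(0^p 1^s')` and `A` is the product of these two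
factors in the other order.
-/

namespace Interleave

variable {α : Type*}

theorem append {A₁ B₁ W₁ A₂ B₂ W₂ : List α} (h₁ : Interleave A₁ B₁ W₁)
    (h₂ : Interleave A₂ B₂ W₂) : Interleave (A₁ ++ A₂) (B₁ ++ B₂) (W₁ ++ W₂) := by
  induction h₁ with
  | nil => exact h₂
  | left _ ih => exact ih.left
  | right _ ih => exact ih.right

theorem replicate_count (b : Bool) (W : List Bool) :
    Interleave (.replicate (W.count b) b) (.replicate (W.count !b) !b) W := by
  induction W with
  | nil => exact .nil
  | cons x W ih =>
    rcases Bool.eq_or_eq_not x b with rfl | rfl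
    · simpa [List.count_cons, List.replicate_succ] using ih.left
    · simpa [List.count_cons, List.replicate_succ] using ih.right

end Interleave

theorem exists_apply_eq_of_succ_le_add_one {f : ℕ → ℤ} {n : ℕ} {t : ℤ}
    (hf : ∀ i < n, f (i + 1) ≤ f i + 1) (h0 : f 0 ≤ t) (hn : t ≤ f n) :
    ∃ i ≤ n, f i = t := by
  induction n with
  | zero => exact ⟨0, le_rfl, le_antisymm h0 hn⟩
  | succ n ih =>
    by_cases htn : t ≤ f n
    · obtain ⟨i, hi, hfi⟩ := ih (fun i hi => hf i (by omega)) htn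
      exact ⟨i, by omega, hfi⟩
    · exact ⟨n + 1, le_rfl, by linarith [hf n (by omega)]⟩

theorem exists_apply_eq_of_abs_sub_le_one {f : ℕ → ℤ} {n : ℕ} {t : ℤ}
    (hf : ∀ i < n, |f (i + 1) - f i| ≤ 1) (ht : t ∈ Set.uIcc (f 0) (f n)) :
    ∃ i ≤ n, f i = t := by
  rcases le_total (f 0) (f n) with hle | hle
  · rw [Set.uIcc_of_le hle] at ht
    exact exists_apply_eq_of_succ_le_add_one (fun i hi => by linarith [(abs_le.mp (hf i hi)).2])
      ht.1 ht.2
  · rw [Set.uIcc_of_ge hle] at ht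
    obtain ⟨i, hi, hfi⟩ := exists_apply_eq_of_succ_le_add_one (f := fun i => -f i) (t := -t)
      (fun i hi => by linarith [(abs_le.mp (hf i hi)).1]) (neg_le_neg ht.2) (neg_le_neg ht.1)
    exact ⟨i, hi, neg_inj.mp hfi⟩

namespace List

variable {α : Type*} [BEq α]

theorem count_take_le_count_take_succ (l : List α) (a : α) (k : ℕ) :
    (l.take k).count a ≤ (l.take (k + 1)).count a :=
  (take_prefix_take_left k.le_succ).count_le a

theorem count_take_succ_le_add_one (l : List α) (a : α) (k : ℕ) :
    (l.take (k + 1)).count a ≤ (l.take k).count a + 1 := by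
  rw [take_add_one, count_append]
  have : l[k]?.toList.length ≤ 1 := by cases l[k]? <;> simp
  linarith [count_le_length (a := a) (l := l[k]?.toList)]

theorem exists_eq_append_append_count_eq_half (W : List α) (a : α) {n k : ℕ}
    (hlen : W.length = n + n) (hcount : W.count a = k + k) :
    ∃ P M S, W = P ++ M ++ S ∧ M.length = n ∧ M.count a = k := by
  set c : ℕ → ℤ := fun j => (W.take j).count a
  have hwindow (i : ℕ) : (((W.drop i).take n).count a : ℤ) = c (i + n) - c i := by
    simp only [c, take_add, count_append]; push_cast; ring
  have hstep (i : ℕ) : |c (i + 1 + n) - c (i + 1) - (c (i + n) - c i)| ≤ 1 := by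
    have h₁ := count_take_le_count_take_succ W a i
    have h₂ := count_take_succ_le_add_one W a i
    have h₃ := count_take_le_count_take_succ W a (i + n)
    have h₄ := count_take_succ_le_add_one W a (i + n)
    rw [abs_le, show i + 1 + n = i + n + 1 by ring]
    simp only [c]
    omega
  have hhalf : (k : ℤ) ∈ Set.uIcc (c (0 + n) - c 0) (c (n + n) - c n) := by
    have : c (n + n) = k + k := by simp [c, ← hlen, hcount]
    simp only [zero_add, c, take_zero, count_nil, Nat.cast_zero, sub_zero] at this ⊢
    rw [Set.mem_uIcc]
    omega
  obtain ⟨i, hi, hk⟩ :=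
    exists_apply_eq_of_abs_sub_le_one (f := fun i => c (i + n) - c i) (fun i _ => hstep i) hhalf
  refine ⟨W.take i, (W.drop i).take n, (W.drop i).drop n, ?_, ?_, ?_⟩
  · rw [append_assoc, take_append_drop, take_append_drop]
  · simp only [length_take, length_drop]; omega
  · exact_mod_cast (hwindow i).trans hk

end List

theorem even_binary_is_cyclic_shuffle_square (W : List Bool)
    (h : ∀ b : Bool, Even (W.count b)) :
    ∃ A B : List Bool, Interleave A B W ∧ A.length = B.length ∧
      ∃ X Y : List Bool, B = X ++ Y ∧ A = Y ++ X := by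
  obtain ⟨o, ho⟩ := h true
  obtain ⟨z, hz⟩ := h false
  have hlen : W.length = (z + o) + (z + o) := by
    rw [← W.count_false_add_count_true, hz, ho]; ring
  obtain ⟨P, M, S, rfl, hM, hMo⟩ := W.exists_eq_append_append_count_eq_half true hlen ho
  have hMz : M.count false = z := by have := M.count_false_add_count_true; omega
  simp only [List.count_append] at ho hz
  refine ⟨.replicate (P.count false) false ++ .replicate (M.count true) true ++
      .replicate (S.count false) false,
    .replicate (P.count true) true ++ .replicate (M.count false) false ++
      .replicate (S.count true) true,
    ((Interleave.replicate_count false P).append (Interleave.replicate_count true M)).append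
      (Interleave.replicate_count false S), ?_,
    .replicate (P.count true) true ++ .replicate (S.count false) false,
    .replicate (P.count false) false ++ .replicate (S.count true) true, ?_, ?_⟩
  · simp only [List.length_append, List.length_replicate]; omega
  · rw [show M.count false = S.count false + P.count false by omega, List.replicate_add]
    simp only [List.append_assoc]
  · rw [show M.count true = S.count true + P.count true by omega, List.replicate_add]
    simp only [List.append_assoc]
end

section
/- Every even binary word with exactly two occurrences of the letter 1 has a cyclic shift that is a shuffle square. -/
open List

lemma inter_rep (i j : ℕ) :
    Interleave (replicate i false) (replicate j false) (replicate (i+j) false) := by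
  induction i with
  | zero =>
    induction j with
    | zero => exact .nil
    | succ j ih =>
      have h : (0:ℕ) + (j+1) = (0+j) + 1 := by omega
      rw [h, replicate_succ, replicate_succ]
      exact .right ih
  | succ i ih =>
    have h : (i+1) + j = (i+j) + 1 := by omega
    rw [h, replicate_succ, replicate_succ]
    exact .left ih

lemma inter_prepend {l1 l2 l : List Bool} (t : ℕ) (h : Interleave l1 l2 l) :
    Interleave (replicate t false ++ l1) l2 (replicate t false ++ l) := by
  induction t with
  | zero => simpa using h
  | succ t ih =>
    rw [replicate_succ]
    exact .left ih

lemma even_case (q b m : ℕ) (hb : b ≤ q) (hm : b + m = 2*q) :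
    IsShuffleSquare (true :: (replicate b false ++ true :: replicate m false)) := by
  refine ⟨true :: replicate q false, ?_⟩
  apply Interleave.left
  nth_rewrite 1 [show replicate q false = replicate b false ++ replicate (q-b) false by
    rw [← replicate_add]; congr 1; omega]
  apply inter_prepend
  apply Interleave.right
  rw [show m = (q-b) + q by omega]
  exact inter_rep _ _

lemma odd_case (q b m : ℕ) (h1 : 1 ≤ b) (h2 : b ≤ q+1) (h3 : b + m = 2*q+1) :
    IsShuffleSquare (false :: true :: (replicate b false ++ true :: replicate m false)) := by
  refine ⟨false :: true :: replicate q false, ?_⟩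
  apply Interleave.left
  apply Interleave.left
  rw [show replicate b false = false :: replicate (b-1) false by
    rw [← replicate_succ]; congr 1; omega]
  apply Interleave.right
  nth_rewrite 1 [show replicate q false = replicate (b-1) false ++ replicate (q-(b-1)) false by
    rw [← replicate_add]; congr 1; omega]
  apply inter_prepend
  apply Interleave.right
  rw [show m = (q-(b-1)) + q by omega]
  exact inter_rep _ _

lemma split_count (W : List Bool) (n : ℕ) (h : W.count true = n+1) :
    ∃ A W', W = A ++ true :: W' ∧ A.count true = 0 ∧ W'.count true = n := by
  induction W with
  | nil => simp at h
  | cons x W ih =>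
    by_cases hx : x = true
    · subst hx
      refine ⟨[], W, rfl, rfl, ?_⟩
      simpa [List.count_cons] using h
    · have hx' : x = false := by simpa using hx
      obtain ⟨A, W', hW, hA, hW'⟩ := ih (by simpa [hx', List.count_cons] using h)
      exact ⟨x :: A, W', by rw [hW]; rfl, by simp [hx', List.count_cons, hA], hW'⟩

lemma all_false (L : List Bool) (h : L.count true = 0) : L = replicate L.length false := by
  rw [List.eq_replicate_length]
  intro b hb
  rcases b with _ | _
  · rfl
  · exact absurd hb (List.count_eq_zero.mp h)

theorem two_ones_cyclic_shift_shuffle_square (W : List Bool)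
    (h1 : W.count true = 2) (h0 : Even (W.count false)) :
    ∃ X Y : List Bool, W = X ++ Y ∧ IsShuffleSquare (Y ++ X) := by
  obtain ⟨A, W1, hW, hA, h1'⟩ := split_count W 1 h1
  obtain ⟨B, C, hW1, hB, hC⟩ := split_count W1 0 h1'
  have hAe := all_false A hA
  have hBe := all_false B hB
  have hCe := all_false C hC
  set a := A.length with ha
  set b := B.length with hb
  set c := C.length with hc
  have hWc : W = replicate a false ++ true :: (replicate b false ++ true :: replicate c false) := by
    rw [hW, hW1, hAe, hBe, hCe]
  have hcount : W.count false = a + b + c := by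
    rw [hWc]
    simp [List.count_append, List.count_cons, List.count_replicate]
    omega
  rw [hcount] at h0
  obtain ⟨k, hk⟩ := h0
  rcases le_or_gt b (c + a) with hle | hgt
  · rcases Nat.even_or_odd b with hbe | hbo
    · -- X = 0^a, Y = 1 0^b 1 0^c ; Y++X = 1 0^b 1 0^(c+a)
      refine ⟨replicate a false, true :: (replicate b false ++ true :: replicate c false),
        hWc, ?_⟩
      have heq : (true :: (replicate b false ++ true :: replicate c false)) ++ replicate a false
          = true :: (replicate b false ++ true :: replicate (c+a) false) := by
        rw [replicate_add]
        simp [List.append_assoc]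
      rw [heq]
      obtain ⟨j, hj⟩ := hbe
      exact even_case ((a+b+c)/2) b (c+a) (by omega) (by omega)
    · -- b odd, so c+a odd, ≥ 1
      obtain ⟨j, hj⟩ := hbo
      rcases Nat.eq_zero_or_pos a with h0a | hpa
      · -- a = 0, c ≥ 1 : X = 1 0^b 1 0^(c-1), Y = [0]
        refine ⟨true :: (replicate b false ++ true :: replicate (c-1) false),
          [false], ?_, ?_⟩
        · rw [hWc, h0a]
          simp only [replicate_zero, nil_append]
          rw [show c = (c-1) + 1 by omega, replicate_add]
          simp [List.append_assoc]
        · have heq : [false] ++ (true :: (replicate b false ++ true :: replicate (c-1) false))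
            = false :: true :: (replicate b false ++ true :: replicate (c-1) false) := rfl
          rw [heq]
          exact odd_case ((a+b+c)/2 - 1) b (c-1) (by omega) (by omega) (by omega)
      · -- a ≥ 1 : X = 0^(a-1), Y = 0 1 0^b 1 0^c ; Y++X = 0 1 0^b 1 0^(c+a-1)
        refine ⟨replicate (a-1) false,
          false :: true :: (replicate b false ++ true :: replicate c false), ?_, ?_⟩
        · rw [hWc]
          rw [show a = (a-1) + 1 by omega, replicate_add]
          simp [List.append_assoc]
        · have heq : (false :: true :: (replicate b false ++ true :: replicate c false))
              ++ replicate (a-1) false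
            = false :: true :: (replicate b false ++ true :: replicate (c+(a-1)) false) := by
            rw [replicate_add]
            simp [List.append_assoc]
          rw [heq]
          exact odd_case ((a+b+c)/2 - 1) b (c+(a-1)) (by omega) (by omega) (by omega)
  · rcases Nat.even_or_odd b with hbe | hbo
    · -- both even; X = 0^a 1 0^b, Y = 1 0^c ; Y++X = 1 0^(c+a) 1 0^b
      obtain ⟨j, hj⟩ := hbe
      refine ⟨replicate a false ++ true :: replicate b false,
        true :: replicate c false, ?_, ?_⟩
      · rw [hWc]; simp [List.append_assoc]
      · have heq : (true :: replicate c false) ++ (replicate a false ++ true :: replicate b false)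
            = true :: (replicate (c+a) false ++ true :: replicate b false) := by
          rw [replicate_add]
          simp only [List.cons_append, List.append_assoc]
        rw [heq]
        exact even_case ((a+b+c)/2) (c+a) b (by omega) (by omega)
    · -- b odd ≥ 1, c+a odd ≥ 1; X = 0^a 1 0^(b-1), Y = 0 1 0^c
      obtain ⟨j, hj⟩ := hbo
      refine ⟨replicate a false ++ true :: replicate (b-1) false,
        false :: true :: replicate c false, ?_, ?_⟩
      · rw [hWc]
        rw [show b = (b-1) + 1 by omega, replicate_add]
        simp [List.append_assoc]
      · have heq : (false :: true :: replicate c false)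
            ++ (replicate a false ++ true :: replicate (b-1) false)
          = false :: true :: (replicate (c+a) false ++ true :: replicate (b-1) false) := by
          rw [replicate_add]
          simp only [List.cons_append, List.append_assoc]
        rw [heq]
        exact odd_case ((a+b+c)/2 - 1) (c+a) (b-1) (by omega) (by omega) (by omega)
end

section
/- Every even binary word with at most four occurrences of the letter 1 has a cyclic shift that is a shuffle square. -/
/- ---------- auxiliary machinery ---------- -/

private def zeros (n : ℕ) : List Bool := List.replicate n false

private def w4 (a b c d : ℕ) : List Bool :=
  true :: (zeros a ++ true :: (zeros b ++ true :: (zeros c ++ true :: zeros d)))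

private def rw4 (a b c d : ℕ) : List Bool :=
  zeros d ++ true :: (zeros c ++ true :: (zeros b ++ true :: (zeros a ++ [true])))

private def w2 (g h : ℕ) : List Bool := true :: (zeros g ++ true :: zeros h)


lemma rep_rep (m n : ℕ) (l : List Bool) :
    List.replicate m false ++ (List.replicate n false ++ l)
      = List.replicate (m + n) false ++ l := by
  rw [← List.append_assoc, ← List.replicate_add]

lemma rep_rep' (m n : ℕ) :
    List.replicate m false ++ List.replicate n false = List.replicate (m + n) false :=
  (List.replicate_add m n false).symm

lemma il_left_all {α : Type*} (l : List α) : Interleave l [] l := by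
  induction l with
  | nil => exact .nil
  | cons a l ih => exact .left ih

lemma il_right_all {α : Type*} (l : List α) : Interleave [] l l := by
  induction l with
  | nil => exact .nil
  | cons a l ih => exact .right ih

lemma il_append {α : Type*} {l₁ l₂ l m₁ m₂ m : List α}
    (h1 : Interleave l₁ l₂ l) (h2 : Interleave m₁ m₂ m) :
    Interleave (l₁ ++ m₁) (l₂ ++ m₂) (l ++ m) := by
  induction h1 with
  | nil => exact h2
  | left _ ih => exact .left ih
  | right _ ih => exact .right ih

lemma il_congr {α : Type*} {l₁ l₂ l l₁' l₂' l' : List α}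
    (h : Interleave l₁ l₂ l) (e1 : l₁ = l₁') (e2 : l₂ = l₂') (e3 : l = l') :
    Interleave l₁' l₂' l' := by
  subst e1; subst e2; subst e3; exact h

lemma il_rep (m n : ℕ) : Interleave (zeros m) (zeros n) (zeros (m + n)) := by
  have h := il_append (il_left_all (zeros m)) (il_right_all (zeros n))
  simp only [List.append_nil, List.nil_append] at h
  have e : zeros (m + n) = zeros m ++ zeros n := List.replicate_add m n false
  rw [e]; exact h

lemma il_rep' (m n s : ℕ) (h : m + n = s) :
    Interleave (zeros m) (zeros n) (zeros s) := by
  subst h; exact il_rep m n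

lemma il_concat {α : Type*} {l₁ l₂ l : List α} (a : α) (h : Interleave l₁ l₂ l) :
    Interleave (l₁ ++ [a]) l₂ (l ++ [a]) := by
  have := il_append h (il_left_all [a])
  simpa using this

lemma il_reverse {α : Type*} {l₁ l₂ l : List α} (h : Interleave l₁ l₂ l) :
    Interleave l₁.reverse l₂.reverse l.reverse := by
  induction h with
  | nil => exact .nil
  | @left a l₁ l₂ l _ ih =>
      simp only [List.reverse_cons]
      exact il_concat a ih
  | @right a l₁ l₂ l _ ih =>
      simp only [List.reverse_cons]
      have := il_append ih (il_right_all [a])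
      simpa using this

lemma ss_reverse {α : Type*} {W : List α} (h : IsShuffleSquare W) :
    IsShuffleSquare W.reverse := by
  obtain ⟨U, hU⟩ := h
  exact ⟨U.reverse, il_reverse hU⟩

/- ---------- explicit shuffle-square patterns ---------- -/

lemma sq0 (k : ℕ) : IsShuffleSquare (zeros (k + k)) :=
  ⟨zeros k, il_rep k k⟩

lemma sq2 (g e : ℕ) : IsShuffleSquare (w2 g (g + 2 * e)) := by
  refine ⟨true :: zeros (g + e), ?_⟩
  have s4 : Interleave (zeros e) (zeros (g + e)) (zeros (g + 2 * e)) :=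
    il_rep' _ _ _ (by omega)
  have s3 : Interleave (zeros e) (true :: zeros (g + e)) (true :: zeros (g + 2 * e)) :=
    .right s4
  have s2 := il_append (il_left_all (zeros g)) s3
  have s1 := Interleave.left (a := true) s2
  refine il_congr s1 ?_ ?_ ?_
  · simp [List.append_assoc, rep_rep, rep_rep', Nat.add_assoc, zeros]
  · simp
  · simp [w2]

lemma pat1122 (a b m e : ℕ) :
    IsShuffleSquare (w4 a b (a + m) (b + m + 2 * e)) := by
  refine ⟨true :: (zeros a ++ true :: zeros (b + m + e)), ?_⟩
  have g8 : Interleave (zeros e) (zeros (b + m + e)) (zeros (b + m + 2 * e)) :=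
    il_rep' _ _ _ (by omega)
  have g7 : Interleave (zeros e) (true :: zeros (b + m + e)) (true :: zeros (b + m + 2 * e)) :=
    .right g8
  have g6 := il_append (il_rep' m a (a + m) (by omega)) g7
  have g5 := Interleave.right (a := true) g6
  have g4 := il_append (il_left_all (zeros b)) g5
  have g3 := Interleave.left (a := true) g4
  have g2 := il_append (il_left_all (zeros a)) g3
  have g1 := Interleave.left (a := true) g2
  refine il_congr g1 ?_ ?_ ?_
  · simp [List.append_assoc, rep_rep, rep_rep', Nat.add_assoc, zeros]
  · simp
  · simp [w4]

lemma pat1212 (p q r m t u : ℕ) (hx : p + q = r + m) :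
    IsShuffleSquare (w4 p (q + r) (t + m) (t + 2 * u)) := by
  refine ⟨true :: (zeros (p + q) ++ true :: zeros (t + u)), ?_⟩
  have h8 : Interleave (zeros u) (zeros (t + u)) (zeros (t + 2 * u)) :=
    il_rep' _ _ _ (by omega)
  have h7 : Interleave (zeros u) (true :: zeros (t + u)) (true :: zeros (t + 2 * u)) :=
    .right h8
  have h6 := il_append (il_rep t m) h7
  have h5 := Interleave.left (a := true) h6
  have h4 := il_append (il_rep q r) h5
  have h3 := Interleave.right (a := true) h4
  have h2 := il_append (il_left_all (zeros p)) h3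
  have h1 := Interleave.left (a := true) h2
  refine il_congr h1 ?_ ?_ ?_
  · simp [List.append_assoc, rep_rep, rep_rep', Nat.add_assoc, zeros]
  · rw [hx]; simp [List.append_assoc, rep_rep, rep_rep', Nat.add_assoc, zeros]
  · simp [w4]

/- ---------- the key normalized four-ones lemma ---------- -/

lemma pat1122' (a b c d m e : ℕ) (e3 : c = a + m) (e4 : d = b + m + 2 * e) :
    IsShuffleSquare (w4 a b c d) := by
  rw [e3, e4]; exact pat1122 a b m e

lemma pat1212' (a b c d p q r m t u : ℕ) (hx : p + q = r + m)
    (e1 : a = p) (e2 : b = q + r) (e3 : c = t + m) (e4 : d = t + 2 * u) :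
    IsShuffleSquare (w4 a b c d) := by
  rw [e1, e2, e3, e4]; exact pat1212 p q r m t u hx

lemma ss_norm (a b c d k : ℕ) (hk : a + b + c + d = k + k)
    (h1 : a ≤ c) (h2 : c ≤ d) (h3 : b ≤ d) :
    IsShuffleSquare (w4 a b c d) := by
  by_cases hbc : b + c ≤ a + d
  · exact pat1122' a b c d (c - a) ((a + d - b - c) / 2) (by omega) (by omega)
  · obtain ⟨x, hx1, hx2, hx3, hx4, hx5, hx6⟩ :
        ∃ x, a ≤ x ∧ x ≤ a + b ∧ a + b ≤ 2 * x ∧ 2 * x ≤ a + b + c ∧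
          a + b + c ≤ 2 * x + d ∧ x ≤ k := ⟨(a + b + 1) / 2, by omega⟩
    exact pat1212' a b c d a (x - a) (a + b - x) (x - (a + b - x))
      (c - (x - (a + b - x))) (k - x - (c - (x - (a + b - x))))
      (by omega) rfl (by omega) (by omega) (by omega)

lemma ss_rnorm (a b c d k : ℕ) (hk : a + b + c + d = k + k)
    (h1 : a ≤ c) (h2 : c ≤ d) (h3 : b ≤ d) :
    IsShuffleSquare (rw4 a b c d) := by
  have h := ss_reverse (ss_norm a b c d k hk h1 h2 h3)
  have e : (w4 a b c d).reverse = rw4 a b c d := by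
    simp [w4, rw4, zeros]
  rwa [e] at h

/- ---------- decomposition of binary words ---------- -/

lemma dec_zero (W : List Bool) (h : W.count true = 0) : ∃ a, W = zeros a := by
  induction W with
  | nil => exact ⟨0, rfl⟩
  | cons x l ih =>
      cases x
      · obtain ⟨a, rfl⟩ := ih (by simpa using h)
        exact ⟨a + 1, by simp [zeros, List.replicate_succ]⟩
      · simp at h

lemma dec_succ (W : List Bool) (n : ℕ) (h : W.count true = n + 1) :
    ∃ a W', W = zeros a ++ true :: W' ∧ W'.count true = n := by
  induction W with
  | nil => simp at h
  | cons x l ih =>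
      cases x
      · obtain ⟨a, W', rfl, hc⟩ := ih (by simpa using h)
        exact ⟨a + 1, W', by simp [zeros, List.replicate_succ], hc⟩
      · refine ⟨0, l, by simp [zeros], ?_⟩
        simp at h
        omega

theorem at_most_four_ones_cyclic_shift_shuffle_square (W : List Bool)
    (h : ∀ b : Bool, Even (W.count b)) (h4 : W.count true ≤ 4) :
    ∃ X Y : List Bool, W = X ++ Y ∧ IsShuffleSquare (Y ++ X) := by
  obtain ⟨kt, hkt⟩ := h true
  have hcase : W.count true = 0 ∨ W.count true = 2 ∨ W.count true = 4 := by omega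
  rcases hcase with h0 | h2 | hfour
  · -- no ones
    obtain ⟨a, rfl⟩ := dec_zero W h0
    obtain ⟨k, hk⟩ := h false
    have ha : a = k + k := by
      simpa [zeros, List.count_replicate] using hk
    refine ⟨[], zeros a, by simp, ?_⟩
    rw [List.append_nil, ha]
    exact sq0 k
  · -- two ones
    obtain ⟨a, W', rfl, hW'⟩ := dec_succ _ 1 h2
    obtain ⟨b, W'', rfl, hW''⟩ := dec_succ _ 0 hW'
    obtain ⟨c, rfl⟩ := dec_zero _ hW''
    obtain ⟨k, hk⟩ := h false
    have habc : a + b + c = k + k := by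
      simp [zeros, List.count_replicate, List.count_append, List.count_cons] at hk
      omega
    by_cases hb : b ≤ c + a
    · refine ⟨zeros a, true :: (zeros b ++ true :: zeros c), rfl, ?_⟩
      have e : (true :: (zeros b ++ true :: zeros c)) ++ zeros a
          = w2 b (b + 2 * ((c + a - b) / 2)) := by
        rw [show b + 2 * ((c + a - b) / 2) = c + a by omega]
        simp [w2, List.append_assoc, rep_rep, rep_rep', Nat.add_assoc, zeros]
      rw [e]; exact sq2 b _
    · refine ⟨zeros a ++ true :: zeros b, true :: zeros c, by simp, ?_⟩
      have e : (true :: zeros c) ++ (zeros a ++ true :: zeros b)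
          = w2 (c + a) ((c + a) + 2 * ((b - c - a) / 2)) := by
        rw [show (c + a) + 2 * ((b - c - a) / 2) = b by omega]
        simp [w2, List.append_assoc, rep_rep, rep_rep', Nat.add_assoc, zeros]
      rw [e]; exact sq2 (c + a) _
  · -- four ones
    obtain ⟨a0, W1, rfl, hc1⟩ := dec_succ _ 3 hfour
    obtain ⟨a1, W2, rfl, hc2⟩ := dec_succ _ 2 hc1
    obtain ⟨a2, W3, rfl, hc3⟩ := dec_succ _ 1 hc2
    obtain ⟨a3, W4, rfl, hc4⟩ := dec_succ _ 0 hc3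
    obtain ⟨a4, rfl⟩ := dec_zero _ hc4
    obtain ⟨k, hk⟩ := h false
    have hsum : a0 + a1 + a2 + a3 + a4 = k + k := by
      simp [zeros, List.count_replicate, List.count_append, List.count_cons] at hk
      omega
    have hmax : (a1 ≤ a4 + a0 ∧ a2 ≤ a4 + a0 ∧ a3 ≤ a4 + a0)
        ∨ (a1 ≤ a3 ∧ a2 ≤ a3 ∧ a4 + a0 ≤ a3)
        ∨ (a1 ≤ a2 ∧ a3 ≤ a2 ∧ a4 + a0 ≤ a2)
        ∨ (a2 ≤ a1 ∧ a3 ≤ a1 ∧ a4 + a0 ≤ a1) := by omega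
    rcases hmax with ⟨u1, u2, u3⟩ | ⟨u1, u2, u3⟩ | ⟨u1, u2, u3⟩ | ⟨u1, u2, u3⟩
    · -- max at position 4 (g4 = a4+a0)
      rcases le_total a1 a3 with hlt | hlt
      · -- rotation (a1,a2,a3,g4) : cut before one₁
        refine ⟨zeros a0,
          true :: (zeros a1 ++ true :: (zeros a2 ++ true :: (zeros a3 ++ true :: zeros a4))),
          rfl, ?_⟩
        have e : (true :: (zeros a1 ++ true :: (zeros a2 ++ true :: (zeros a3 ++ true :: zeros a4)))) ++ zeros a0
            = w4 a1 a2 a3 (a4 + a0) := by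
          simp [w4, List.append_assoc, rep_rep, rep_rep', Nat.add_assoc, zeros]
        rw [e]
        exact ss_norm a1 a2 a3 (a4 + a0) k (by omega) hlt u3 u2
      · -- reflection (a3,a2,a1,g4) : cut after one₄
        refine ⟨zeros a0 ++ true :: (zeros a1 ++ true :: (zeros a2 ++ true :: (zeros a3 ++ [true]))),
          zeros a4, by simp, ?_⟩
        have e : zeros a4 ++ (zeros a0 ++ true :: (zeros a1 ++ true :: (zeros a2 ++ true :: (zeros a3 ++ [true]))))
            = rw4 a3 a2 a1 (a4 + a0) := by
          simp [rw4, List.append_assoc, rep_rep, rep_rep', Nat.add_assoc, zeros]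
        rw [e]
        exact ss_rnorm a3 a2 a1 (a4 + a0) k (by omega) hlt u1 u2
    · -- max at position 3 (a3)
      rcases le_total (a4 + a0) a2 with hlt | hlt
      · -- rotation (g4,a1,a2,a3) : cut before one₄
        refine ⟨zeros a0 ++ true :: (zeros a1 ++ true :: (zeros a2 ++ true :: zeros a3)),
          true :: zeros a4, by simp, ?_⟩
        have e : (true :: zeros a4) ++ (zeros a0 ++ true :: (zeros a1 ++ true :: (zeros a2 ++ true :: zeros a3)))
            = w4 (a4 + a0) a1 a2 a3 := by
          simp [w4, List.append_assoc, rep_rep, rep_rep', Nat.add_assoc, zeros]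
        rw [e]
        exact ss_norm (a4 + a0) a1 a2 a3 k (by omega) hlt u2 u1
      · -- reflection (a2,a1,g4,a3) : cut after one₃
        refine ⟨zeros a0 ++ true :: (zeros a1 ++ true :: (zeros a2 ++ [true])),
          zeros a3 ++ true :: zeros a4, by simp, ?_⟩
        have e : (zeros a3 ++ true :: zeros a4) ++ (zeros a0 ++ true :: (zeros a1 ++ true :: (zeros a2 ++ [true])))
            = rw4 a2 a1 (a4 + a0) a3 := by
          simp [rw4, List.append_assoc, rep_rep, rep_rep', Nat.add_assoc, zeros]
        rw [e]
        exact ss_rnorm a2 a1 (a4 + a0) a3 k (by omega) hlt u3 u1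
    · -- max at position 2 (a2)
      rcases le_total a3 a1 with hlt | hlt
      · -- rotation (a3,g4,a1,a2) : cut before one₃
        refine ⟨zeros a0 ++ true :: (zeros a1 ++ true :: zeros a2),
          true :: (zeros a3 ++ true :: zeros a4), by simp, ?_⟩
        have e : (true :: (zeros a3 ++ true :: zeros a4)) ++ (zeros a0 ++ true :: (zeros a1 ++ true :: zeros a2))
            = w4 a3 (a4 + a0) a1 a2 := by
          simp [w4, List.append_assoc, rep_rep, rep_rep', Nat.add_assoc, zeros]
        rw [e]
        exact ss_norm a3 (a4 + a0) a1 a2 k (by omega) hlt u1 u3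
      · -- reflection (a1,g4,a3,a2) : cut after one₂
        refine ⟨zeros a0 ++ true :: (zeros a1 ++ [true]),
          zeros a2 ++ true :: (zeros a3 ++ true :: zeros a4), by simp, ?_⟩
        have e : (zeros a2 ++ true :: (zeros a3 ++ true :: zeros a4)) ++ (zeros a0 ++ true :: (zeros a1 ++ [true]))
            = rw4 a1 (a4 + a0) a3 a2 := by
          simp [rw4, List.append_assoc, rep_rep, rep_rep', Nat.add_assoc, zeros]
        rw [e]
        exact ss_rnorm a1 (a4 + a0) a3 a2 k (by omega) hlt u2 u3
    · -- max at position 1 (a1)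
      rcases le_total a2 (a4 + a0) with hlt | hlt
      · -- rotation (a2,a3,g4,a1) : cut before one₂
        refine ⟨zeros a0 ++ true :: zeros a1,
          true :: (zeros a2 ++ true :: (zeros a3 ++ true :: zeros a4)), by simp, ?_⟩
        have e : (true :: (zeros a2 ++ true :: (zeros a3 ++ true :: zeros a4))) ++ (zeros a0 ++ true :: zeros a1)
            = w4 a2 a3 (a4 + a0) a1 := by
          simp [w4, List.append_assoc, rep_rep, rep_rep', Nat.add_assoc, zeros]
        rw [e]
        exact ss_norm a2 a3 (a4 + a0) a1 k (by omega) hlt u3 u2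
      · -- reflection (g4,a3,a2,a1) : cut after one₁
        refine ⟨zeros a0 ++ [true],
          zeros a1 ++ true :: (zeros a2 ++ true :: (zeros a3 ++ true :: zeros a4)), by simp, ?_⟩
        have e : (zeros a1 ++ true :: (zeros a2 ++ true :: (zeros a3 ++ true :: zeros a4))) ++ (zeros a0 ++ [true])
            = rw4 (a4 + a0) a3 a2 a1 := by
          simp [rw4, List.append_assoc, rep_rep, rep_rep', Nat.add_assoc, zeros]
        rw [e]
        exact ss_rnorm (a4 + a0) a3 a2 a1 k (by omega) hlt u1 u2
end

section
/- The ternary word 012210 cannot be split into two disjoint subwords A and B such that A is a cyclic shift of B. Hence the analogue of the cyclic shuffle square theorem fails for the ternary alphabet. -/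
def splits {α : Type*} : List α → List (List α × List α)
  | [] => [([], [])]
  | a :: l => (splits l).map (fun p => (a :: p.1, p.2)) ++
      (splits l).map (fun p => (p.1, a :: p.2))

lemma mem_splits {α : Type*} {A B W : List α} (h : Interleave A B W) :
    (A, B) ∈ splits W := by
  induction h with
  | nil => simp [splits]
  | left _ ih => simp only [splits, List.mem_append, List.mem_map]; exact Or.inl ⟨_, ih, rfl⟩
  | right _ ih => simp only [splits, List.mem_append, List.mem_map]; exact Or.inr ⟨_, ih, rfl⟩

theorem ternary_not_cyclic_shuffle_square :
    ¬ ∃ (A B X Y : List (Fin 3)), Interleave A B ([0, 1, 2, 2, 1, 0] : List (Fin 3)) ∧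
      B = X ++ Y ∧ A = Y ++ X := by
  rintro ⟨A, B, X, Y, h, hB, hA⟩
  have hmem := mem_splits h
  have hrot : A = B.rotate X.length := by
    rw [hB, List.rotate_append_length_eq, hA]
  have hle : X.length ≤ B.length := by
    rw [hB, List.length_append]; omega
  have key : ∀ p ∈ splits ([0, 1, 2, 2, 1, 0] : List (Fin 3)),
      ∀ n ≤ p.2.length, p.1 ≠ p.2.rotate n := by decide
  exact key _ hmem _ hle hrot
end

section
/- A binary word W of length 2n with exactly two occurrences of 1 is a shuffle square if and only if either (i) W has a prefix of the form 0^{2p}11 (i.e., W = 0^{2p} 1 1 0^{2n-2p-2} for some p), or (ii) W contains a factor of the form 1 0^{k} 1 with 1 ≤ k ≤ n - 1. -/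
lemma interleave_length {α : Type*} {l₁ l₂ l : List α} (h : Interleave l₁ l₂ l) :
    l.length = l₁.length + l₂.length := by
  induction h with
  | nil => simp
  | left _ ih => simp [ih]; omega
  | right _ ih => simp [ih]; omega

lemma interleave_count {α : Type*} [DecidableEq α] (x : α) {l₁ l₂ l : List α}
    (h : Interleave l₁ l₂ l) : l.count x = l₁.count x + l₂.count x := by
  induction h with
  | nil => simp
  | left _ ih => simp [List.count_cons, ih]; ring
  | right _ ih => simp [List.count_cons, ih]; ring

lemma interleave_symm {α : Type*} {l₁ l₂ l : List α} (h : Interleave l₁ l₂ l) :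
    Interleave l₂ l₁ l := by
  induction h with
  | nil => exact .nil
  | left _ ih => exact .right ih
  | right _ ih => exact .left ih

lemma interleave_rep_right {α : Type*} (x : α) (d : ℕ) {l₁ l₂ l : List α}
    (h : Interleave l₁ l₂ l) :
    Interleave l₁ (List.replicate d x ++ l₂) (List.replicate d x ++ l) := by
  induction d with
  | zero => simpa
  | succ d ih => exact .right ih

lemma interleave_rep_left {α : Type*} (x : α) (c : ℕ) {l₁ l₂ l : List α}
    (h : Interleave l₁ l₂ l) :
    Interleave (List.replicate c x ++ l₁) l₂ (List.replicate c x ++ l) := by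
  induction c with
  | zero => simpa
  | succ c ih => exact .left ih

lemma interleave_rep {α : Type*} (x : α) (c d : ℕ) {l₁ l₂ l : List α}
    (h : Interleave l₁ l₂ l) :
    Interleave (List.replicate c x ++ l₁) (List.replicate d x ++ l₂)
      (List.replicate (c + d) x ++ l) := by
  rw [List.replicate_add, List.append_assoc]
  exact interleave_rep_left x c (interleave_rep_right x d h)



lemma interleave_ext : ∀ (p : ℕ) (Z l₁ l₂ : List Bool),
    Interleave l₁ l₂ (List.replicate p false ++ true :: Z) →
    ∃ c d l₁' l₂', c + d = p ∧ l₁ = List.replicate c false ++ l₁' ∧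
      l₂ = List.replicate d false ++ l₂' ∧
      ((∃ t, l₁' = true :: t ∧ Interleave t l₂' Z) ∨
       (∃ t, l₂' = true :: t ∧ Interleave l₁' t Z)) := by
  intro p
  induction p with
  | zero =>
    intro Z l₁ l₂ h
    simp only [List.replicate_zero, List.nil_append] at h
    cases h with
    | left h => exact ⟨0, 0, _, _, rfl, rfl, rfl, Or.inl ⟨_, rfl, h⟩⟩
    | right h => exact ⟨0, 0, _, _, rfl, rfl, rfl, Or.inr ⟨_, rfl, h⟩⟩
  | succ p ih =>
    intro Z l₁ l₂ h
    rw [List.replicate_succ, List.cons_append] at h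
    cases h with
    | left h =>
      obtain ⟨c, d, l₁', l₂', hcd, h1, h2, h3⟩ := ih Z _ _ h
      exact ⟨c + 1, d, l₁', l₂', by omega, by simp [List.replicate_succ, h1], h2, h3⟩
    | right h =>
      obtain ⟨c, d, l₁', l₂', hcd, h1, h2, h3⟩ := ih Z _ _ h
      exact ⟨c, d + 1, l₁', l₂', by omega, h1, by simp [List.replicate_succ, h2], h3⟩

lemma rep_true_eq : ∀ (c a : ℕ) (t s : List Bool),
    List.replicate c false ++ true :: t = List.replicate a false ++ true :: s →
    c = a ∧ t = s := by
  intro c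
  induction c with
  | zero =>
    intro a t s h
    cases a with
    | zero => simpa using h
    | succ a => simp [List.replicate_succ] at h
  | succ c ih =>
    intro a t s h
    cases a with
    | zero => simp [List.replicate_succ] at h
    | succ a =>
      simp only [List.replicate_succ, List.cons_append, List.cons.injEq, true_and] at h
      obtain ⟨h1, h2⟩ := ih a t s h
      exact ⟨by omega, h2⟩

lemma rep_prefix : ∀ (d a : ℕ) (r l : List Bool),
    List.replicate d false ++ l = List.replicate a false ++ true :: r →
    d ≤ a ∧ l = List.replicate (a - d) false ++ true :: r := by
  intro d
  induction d with
  | zero => intro a r l h; exact ⟨Nat.zero_le a, by simpa using h⟩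
  | succ d ih =>
    intro a r l h
    cases a with
    | zero => simp [List.replicate_succ] at h
    | succ a =>
      simp only [List.replicate_succ, List.cons_append, List.cons.injEq, true_and] at h
      obtain ⟨h1, h2⟩ := ih a r l h
      exact ⟨by omega, by simpa [Nat.succ_sub_succ] using h2⟩

lemma rep_eq_rep_append : ∀ (c b : ℕ) (l : List Bool),
    List.replicate b false = List.replicate c false ++ l →
    c ≤ b ∧ l = List.replicate (b - c) false := by
  intro c
  induction c with
  | zero => intro b l h; exact ⟨Nat.zero_le b, by simpa using h.symm⟩
  | succ c ih =>
    intro b l h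
    cases b with
    | zero => simp [List.replicate_succ] at h
    | succ b =>
      simp only [List.replicate_succ, List.cons_append, List.cons.injEq, true_and] at h
      obtain ⟨h1, h2⟩ := ih b l h
      exact ⟨by omega, by simpa [Nat.succ_sub_succ] using h2⟩

lemma eq_rep_of_count (l : List Bool) (h : l.count true = 0) :
    l = List.replicate l.length false := by
  have h' : true ∉ l := List.count_eq_zero.mp h
  refine List.eq_replicate_length.mpr fun b hb => ?_
  cases b
  · rfl
  · exact absurd hb h'

lemma exists_rep_decomp : ∀ (l : List Bool), 0 < l.count true →
    ∃ p t, l = List.replicate p false ++ true :: t ∧ t.count true + 1 = l.count true := by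
  intro l
  induction l with
  | nil => simp
  | cons a l ih =>
    intro h
    cases a with
    | true => exact ⟨0, l, by simp, by simp [List.count_cons]⟩
    | false =>
      have h' : 0 < l.count true := by simpa [List.count_cons] using h
      obtain ⟨p, t, h1, h2⟩ := ih h'
      exact ⟨p + 1, t, by simp [List.replicate_succ, h1], by simp [List.count_cons, h2]⟩

theorem two_ones_shuffle_square_iff (n : ℕ) (hn : 1 ≤ n) (W : List Bool)
    (hlen : W.length = 2 * n) (h1 : W.count true = 2) :
    IsShuffleSquare W ↔
      (∃ p : ℕ, W = List.replicate (2 * p) false ++ true :: true ::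
        List.replicate (2 * n - 2 * p - 2) false) ∨
      (∃ (k : ℕ) (P S : List Bool), 1 ≤ k ∧ k ≤ n - 1 ∧
        W = P ++ true :: List.replicate k false ++ true :: S) := by
  constructor
  · rintro ⟨U, hU⟩
    have hcU : U.count true = 1 := by
      have := interleave_count true hU; omega
    have hlU : U.length = n := by
      have := interleave_length hU; omega
    obtain ⟨a, t, hUeq, hct⟩ := exists_rep_decomp U (by omega)
    obtain ⟨b, ht⟩ : ∃ b, t = List.replicate b false := ⟨_, eq_rep_of_count t (by omega)⟩
    subst ht
    have hab : a + 1 + b = n := by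
      rw [hUeq] at hlU; simp at hlU; omega
    obtain ⟨p, Z0, hW1, hcZ0⟩ := exists_rep_decomp W (by omega)
    obtain ⟨k, Z1, hZ0, hcZ1⟩ := exists_rep_decomp Z0 (by omega)
    obtain ⟨s, hZ1⟩ : ∃ s, Z1 = List.replicate s false :=
      ⟨_, eq_rep_of_count Z1 (by omega)⟩
    subst hZ1
    rw [hZ0] at hW1
    have hlps : p + 1 + k + 1 + s = 2 * n := by
      rw [hW1] at hlen; simp at hlen; omega
    rw [hW1, hUeq] at hU
    obtain ⟨c, d, l₁', l₂', hcd, e1, e2, hdisj⟩ := interleave_ext p _ _ _ hU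
    have step1 : ∃ d, d ≤ a ∧ a + d = p ∧
        Interleave (List.replicate b false)
          (List.replicate (a - d) false ++ true :: List.replicate b false)
          (List.replicate k false ++ true :: List.replicate s false) := by
      rcases hdisj with ⟨t₁, rfl, hin⟩ | ⟨t₁, rfl, hin⟩
      · obtain ⟨hc, ht₁⟩ := rep_true_eq c a t₁ _ e1.symm
        obtain ⟨hd, hl₂⟩ := rep_prefix d a _ l₂' e2.symm
        subst ht₁; subst hl₂; subst hc
        exact ⟨d, hd, by omega, hin⟩
      · obtain ⟨hd', ht₁⟩ := rep_true_eq d a t₁ _ e2.symm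
        obtain ⟨hc', hl₁⟩ := rep_prefix c a _ l₁' e1.symm
        subst ht₁; subst hl₁; subst hd'
        exact ⟨c, hc', by omega, interleave_symm hin⟩
    obtain ⟨d, hda, hp, hin⟩ := step1
    obtain ⟨c', d', x, y, hcd', f1, f2, hdisj2⟩ := interleave_ext k _ _ _ hin
    rcases hdisj2 with ⟨t₂, rfl, _⟩ | ⟨t₂, rfl, hin2⟩
    · have := congrArg (List.count true) f1
      simp [List.count_append, List.count_replicate, List.count_cons] at this
    · obtain ⟨hd', ht₂⟩ := rep_true_eq d' (a - d) t₂ _ f2.symm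
      obtain ⟨hcb, hx⟩ := rep_eq_rep_append c' b x f1
      subst ht₂; subst hx
      have hs : s = (b - c') + b := by
        have := interleave_length hin2
        simpa using this
      by_cases hk : k = 0
      · left
        refine ⟨d, ?_⟩
        have hpa : p = 2 * d := by omega
        have hss : s = 2 * n - 2 * d - 2 := by omega
        rw [hW1, hk, hpa, hss]
        simp
      · right
        refine ⟨k, List.replicate p false, List.replicate s false, by omega, by omega, ?_⟩
        rw [hW1]
        simp [List.append_assoc]
  · rintro (⟨p, hW⟩ | ⟨k, P, S, hk1, hk2, hW⟩)
    · have hp : 2 * p + 2 ≤ 2 * n := by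
        rw [hW] at hlen; simp at hlen; omega
      refine ⟨List.replicate p false ++ true :: List.replicate (n - 1 - p) false, ?_⟩
      rw [hW]
      have h0 := interleave_rep false (n - 1 - p) (n - 1 - p) Interleave.nil
      have h1 := Interleave.left (a := true) (Interleave.right (a := true) h0)
      have h2 := interleave_rep false p p h1
      have e1 : p + p = 2 * p := by omega
      have e2 : n - 1 - p + (n - 1 - p) = 2 * n - 2 * p - 2 := by omega
      rw [e1, e2] at h2
      simpa using h2
    · have hcPS : P.count true = 0 ∧ S.count true = 0 := by
        rw [hW] at h1
        simp [List.count_append, List.count_cons, List.count_replicate] at h1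
        omega
      obtain ⟨p, hP⟩ : ∃ p, P = List.replicate p false := ⟨_, eq_rep_of_count P hcPS.1⟩
      obtain ⟨s, hS⟩ : ∃ s, S = List.replicate s false := ⟨_, eq_rep_of_count S hcPS.2⟩
      subst hP; subst hS
      have hlen' : p + 1 + k + 1 + s = 2 * n := by
        rw [hW] at hlen; simp at hlen; omega
      obtain ⟨a, ha1, ha2, ha3, ha4⟩ :
          ∃ a, p ≤ 2 * a ∧ 2 * a ≤ p + k ∧ a ≤ p ∧ p + k ≤ (n - 1) + a :=
        ⟨max ((p + 1) / 2) (p + k + 1 - n), by omega, by omega, by omega, by omega⟩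
      refine ⟨List.replicate a false ++ true :: List.replicate (n - 1 - a) false, ?_⟩
      rw [hW]
      have h0 := interleave_rep false (n - 1 - a - (p + k - 2 * a)) (n - 1 - a) Interleave.nil
      have e0 : n - 1 - a - (p + k - 2 * a) + (n - 1 - a) = s := by omega
      rw [e0] at h0
      have h1 := Interleave.right (a := true) h0
      have h2 := interleave_rep false (p + k - 2 * a) (2 * a - p) h1
      have e2 : p + k - 2 * a + (2 * a - p) = k := by omega
      rw [e2] at h2
      have h3 := Interleave.left (a := true) h2
      have h4 := interleave_rep false a (p - a) h3
      have e4 : a + (p - a) = p := by omega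
      rw [e4] at h4
      simp only [List.append_nil] at h4
      have eA : List.replicate (p + k - 2 * a) false ++
          List.replicate (n - 1 - a - (p + k - 2 * a)) false =
          List.replicate (n - 1 - a) false := by
        rw [← List.replicate_add]
        congr 1
        omega
      have eB : List.replicate (p - a) false ++
          (List.replicate (2 * a - p) false ++ true :: List.replicate (n - 1 - a) false) =
          List.replicate a false ++ true :: List.replicate (n - 1 - a) false := by
        rw [← List.append_assoc, ← List.replicate_add]
        have : p - a + (2 * a - p) = a := by omega
        rw [this]
      rw [eA, eB] at h4
      simpa [List.append_assoc] using h4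
end

section
/- A canonical word W is a shuffle square if and only if W contains no subword (subsequence) of the form XYYX where X and Y are single letters. In particular, the canonical shuffle squares of length 2k are counted by the Catalan number C_k = (1/(k+1))·binom(2k,k). -/
def Canonical {k : ℕ} (W : List (Fin k)) : Prop :=
  W.length = 2 * k ∧ (∀ a : Fin k, W.count a = 2) ∧
    ∀ i j : Fin k, i < j → W.idxOf i < W.idxOf j

def HasXYYX {k : ℕ} (W : List (Fin k)) : Prop :=
  ∃ i₁ i₂ i₃ i₄ : Fin W.length, i₁ < i₂ ∧ i₂ < i₃ ∧ i₃ < i₄ ∧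
    W.get i₁ = W.get i₄ ∧ W.get i₂ = W.get i₃ ∧ W.get i₁ ≠ W.get i₂

open List DyckStep

/-- Build a word from a Dyck-step pattern, consuming `A` on `U` and `B` on `D`. -/
def bld {α : Type*} : List DyckStep → List α → List α → List α
  | [], _, _ => []
  | U :: bs, a :: A, B => a :: bld bs A B
  | U :: _, [], _ => []
  | D :: bs, A, b :: B => b :: bld bs A B
  | D :: _, _, [] => []

section lemmas

variable {α : Type*}

lemma interleave_count_s15 [DecidableEq α] {A B C : List α} (h : Interleave A B C) (x : α) :
    C.count x = A.count x + B.count x := by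
  induction h with
  | nil => rfl
  | left _ ih => simp [count_cons, ih]; omega
  | right _ ih => simp [count_cons, ih]; omega

lemma interleave_split {A B C : List α} (h : Interleave A B C) :
    ∀ s : List α, s <+ C → ∃ s₁ s₂, Interleave s₁ s₂ s ∧ s₁ <+ A ∧ s₂ <+ B := by
  induction h with
  | nil =>
    intro s hs
    rw [sublist_nil.mp hs]
    exact ⟨[], [], .nil, by simp, by simp⟩
  | @left a A B C _ ih =>
    intro s hs
    cases hs with
    | cons _ h' =>
      obtain ⟨s₁, s₂, h1, h2, h3⟩ := ih _ h'
      exact ⟨s₁, s₂, h1, h2.cons a, h3⟩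
    | cons_cons _ h' =>
      obtain ⟨s₁, s₂, h1, h2, h3⟩ := ih _ h'
      exact ⟨a :: s₁, s₂, h1.left, h2.cons₂ a, h3⟩
  | @right a A B C _ ih =>
    intro s hs
    cases hs with
    | cons _ h' =>
      obtain ⟨s₁, s₂, h1, h2, h3⟩ := ih _ h'
      exact ⟨s₁, s₂, h1, h2, h3.cons a⟩
    | cons_cons _ h' =>
      obtain ⟨s₁, s₂, h1, h2, h3⟩ := ih _ h'
      exact ⟨s₁, a :: s₂, h1.right, h2, h3.cons₂ a⟩

lemma bld_interleave : ∀ (bs : List DyckStep) (A B : List α),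
    bs.count U = A.length → bs.count D = B.length → Interleave A B (bld bs A B) := by
  intro bs
  induction bs with
  | nil =>
    intro A B h1 h2
    simp at h1 h2
    rw [eq_nil_of_length_eq_zero h1.symm, eq_nil_of_length_eq_zero h2.symm]
    exact .nil
  | cons s bs ih =>
    intro A B h1 h2
    cases s with
    | U =>
      simp [count_cons] at h1 h2
      match A with
      | [] => simp at h1
      | a :: A => exact .left (ih A B (by simpa using h1) h2)
    | D =>
      simp [count_cons] at h1 h2
      match B with
      | [] => simp at h2
      | b :: B => exact .right (ih A B h1 (by simpa using h2))

lemma bld_length : ∀ (bs : List DyckStep) (A B : List α),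
    bs.count U = A.length → bs.count D = B.length → (bld bs A B).length = bs.length := by
  intro bs
  induction bs with
  | nil => intro A B _ _; rfl
  | cons s bs ih =>
    intro A B h1 h2
    cases s with
    | U =>
      simp [count_cons] at h1 h2
      match A with
      | [] => simp at h1
      | a :: A => simp [bld, ih A B (by simpa using h1) h2]
    | D =>
      simp [count_cons] at h1 h2
      match B with
      | [] => simp at h2
      | b :: B => simp [bld, ih A B h1 (by simpa using h2)]

lemma dyck_length (bs : List DyckStep) : bs.length = bs.count U + bs.count D := by
  induction bs with
  | nil => rfl
  | cons s bs ih => cases s <;> simp [count_cons, ih] <;> omega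

lemma two_sub_conflict [DecidableEq α] {x y : α} {l : List α} (hxy : x ≠ y)
    (hx : l.count x ≤ 1) (hy : l.count y ≤ 1) :
    [x, y] <+ l → [y, x] <+ l → False := by
  induction l with
  | nil => intro h _; simp at h
  | cons c t ih =>
    intro h1 h2
    cases h1 with
    | cons_cons _ h1' =>
      cases h2 with
      | cons_cons _ h2' => exact hxy rfl
      | cons _ h2' =>
        have hxt : x ∈ t := h2'.subset (by simp)
        have := count_pos_iff.mpr hxt
        simp [count_cons] at hx
        omega
    | cons _ h1' =>
      cases h2 with
      | cons_cons _ h2' =>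
        have hyt : y ∈ t := h1'.subset (by simp)
        have := count_pos_iff.mpr hyt
        simp [count_cons] at hy
        omega
      | cons _ h2' =>
        exact ih (le_trans ((sublist_cons_self c t).count_le x) hx)
          (le_trans ((sublist_cons_self c t).count_le y) hy) h1' h2'

lemma interleave_xyyx [DecidableEq α] {x y : α} {s₁ s₂ : List α}
    (h : Interleave s₁ s₂ [x, y, y, x]) (hxy : x ≠ y)
    (c1 : s₁.count x ≤ 1) (c2 : s₁.count y ≤ 1) (c3 : s₂.count x ≤ 1) (c4 : s₂.count y ≤ 1) :
    ([x, y] <+ s₁ ∧ [y, x] <+ s₂) ∨ ([y, x] <+ s₁ ∧ [x, y] <+ s₂) := by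
  rcases h with _ | h | h <;>
    rcases h with _ | h | h <;>
      rcases h with _ | h | h <;>
        rcases h with _ | h | h <;>
          rcases h with _ <;>
            simp_all [count_cons]

lemma no_shuffle_xyyx [DecidableEq α] {V W : List α} (hI : Interleave V V W) {x y : α}
    (hxy : x ≠ y) (hx : W.count x = 2) (hy : W.count y = 2) : ¬ ([x, y, y, x] <+ W) := by
  intro hsub
  have hvx : V.count x = 1 := by have := interleave_count_s15 hI x; omega
  have hvy : V.count y = 1 := by have := interleave_count_s15 hI y; omega
  obtain ⟨s₁, s₂, h1, h2, h3⟩ := interleave_split hI _ hsub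
  have c1 := le_trans (h2.count_le x) hvx.le
  have c2 := le_trans (h2.count_le y) hvy.le
  have c3 := le_trans (h3.count_le x) hvx.le
  have c4 := le_trans (h3.count_le y) hvy.le
  rcases interleave_xyyx h1 hxy c1 c2 c3 c4 with ⟨d1, d2⟩ | ⟨d1, d2⟩
  · exact two_sub_conflict hxy hvx.le hvy.le (d1.trans h2) (d2.trans h3)
  · exact two_sub_conflict hxy hvx.le hvy.le (d2.trans h3) (d1.trans h2)

lemma pair_sublist_of_indexOf_lt [DecidableEq α] {x y : α} {l : List α}
    (hx : x ∈ l) (hy : y ∈ l) (h : l.idxOf x < l.idxOf y) : [x, y] <+ l := by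
  induction l with
  | nil => simp at hx
  | cons c t ih =>
    by_cases hcx : c = x
    · subst hcx
      have hyc : y ≠ c := by
        rintro rfl
        simp at h
      have hyt : y ∈ t := by
        rcases mem_cons.mp hy with h' | h'
        · exact absurd h' hyc
        · exact h'
      exact (singleton_sublist.mpr hyt).cons₂ c
    · have hcy : c ≠ y := by
        rintro rfl
        rw [idxOf_cons_self] at h
        omega
      have hxt : x ∈ t := by
        rcases mem_cons.mp hx with h' | h'
        · exact absurd h'.symm hcx
        · exact h'
      have hyt : y ∈ t := by
        rcases mem_cons.mp hy with h' | h'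
        · exact absurd h'.symm hcy
        · exact h'
      have h' : t.idxOf x < t.idxOf y := by
        rw [idxOf_cons_ne _ hcx, idxOf_cons_ne _ hcy] at h
        omega
      exact (ih hxt hyt h').cons c

lemma sorted_pair_sublist {x y : α} {r : α → α → Prop} {l : List α} (hl : l.Pairwise r)
    (hx : x ∈ l) (hy : y ∈ l) (hr : r x y) (hanti : ¬ r y x) (hirr : ¬ r x x) : [x, y] <+ l := by
  induction l with
  | nil => simp at hx
  | cons c t ih =>
    rcases pairwise_cons.mp hl with ⟨hc, ht⟩
    rcases mem_cons.mp hx with rfl | hxt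
    · have hyt : y ∈ t := by
        rcases mem_cons.mp hy with rfl | h'
        · exact absurd hr hirr
        · exact h'
      exact (singleton_sublist.mpr hyt).cons₂ x
    · have hyt : y ∈ t := by
        rcases mem_cons.mp hy with rfl | h'
        · exact absurd (hc x hxt) hanti
        · exact h'
      exact (ih ht hxt hyt).cons c

lemma hasXYYX_iff {k : ℕ} (W : List (Fin k)) :
    HasXYYX W ↔ ∃ x y : Fin k, x ≠ y ∧ [x, y, y, x] <+ W := by
  constructor
  · rintro ⟨i₁, i₂, i₃, i₄, h12, h23, h34, e14, e23, ne12⟩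
    refine ⟨W.get i₁, W.get i₂, ne12, ?_⟩
    rw [sublist_iff_exists_fin_orderEmbedding_get_eq]
    have hmono : StrictMono (fun j : Fin 4 => (![i₁, i₂, i₃, i₄] j : Fin W.length)) := by
      intro a b hab
      fin_cases a <;> fin_cases b <;> simp_all <;>
        first
          | exact h12 | exact h23 | exact h34
          | exact h12.trans h23 | exact h23.trans h34 | exact (h12.trans h23).trans h34
    refine ⟨OrderEmbedding.ofStrictMono _ hmono, ?_⟩
    intro ix
    fin_cases ix
    · simp
    · simp
    · simpa using e23
    · simpa using e14
  · rintro ⟨x, y, hxy, hsub⟩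
    rw [sublist_iff_exists_fin_orderEmbedding_get_eq] at hsub
    obtain ⟨f, hf⟩ := hsub
    have l4 : ([x, y, y, x] : List (Fin k)).length = 4 := rfl
    refine ⟨f ⟨0, by omega⟩, f ⟨1, by omega⟩, f ⟨2, by omega⟩, f ⟨3, by omega⟩,
      f.strictMono (by norm_num [Fin.lt_def]), f.strictMono (by norm_num [Fin.lt_def]),
      f.strictMono (by norm_num [Fin.lt_def]), ?_, ?_, ?_⟩
    · rw [← hf ⟨0, by omega⟩, ← hf ⟨3, by omega⟩]; rfl
    · rw [← hf ⟨1, by omega⟩, ← hf ⟨2, by omega⟩]; rfl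
    · rw [← hf ⟨0, by omega⟩, ← hf ⟨1, by omega⟩]; exact hxy

lemma bld_indexOf [DecidableEq α] : ∀ (bs : List DyckStep) (C A : List α),
    (C ++ A).Nodup → bs.count U = A.length → bs.count D = C.length + A.length →
    (∀ i, (bs.take i).count D ≤ C.length + (bs.take i).count U) →
    ∀ x y, [x, y] <+ A → (bld bs A (C ++ A)).idxOf x < (bld bs A (C ++ A)).idxOf y := by
  intro bs
  induction bs with
  | nil =>
    intro C A _ h1 _ _ x y hxy
    simp at h1
    rw [eq_nil_of_length_eq_zero h1.symm] at hxy
    simp at hxy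
  | cons s bs ih =>
    intro C A hnd h1 h2 h3 x y hxy
    cases s with
    | U =>
      simp [count_cons] at h1 h2
      match A, hxy, h1, h2, hnd with
      | a :: A', hxy, h1, h2, hnd =>
        have hbld : bld (U :: bs) (a :: A') (C ++ a :: A') = a :: bld bs A' ((C ++ [a]) ++ A') := by
          show a :: bld bs A' (C ++ a :: A') = _
          rw [append_cons]
        have hnd' : ((C ++ [a]) ++ A').Nodup := by rwa [← append_cons]
        have h3' : ∀ i, ((bs.take i).count D ≤ (C ++ [a]).length + (bs.take i).count U) := by
          intro i
          have := h3 (i + 1)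
          simp [count_cons] at this ⊢
          omega
        have key := ih (C ++ [a]) A' hnd' (by simpa using h1) (by simp at h2 ⊢; omega) h3'
        have hna : a ∉ A' :=
          (nodup_cons.mp (hnd.sublist (sublist_append_right C (a :: A')))).1
        rw [hbld]
        cases hxy with
        | cons_cons _ h' =>
          have hyA : y ∈ A' := singleton_sublist.mp h'
          have hay : x ≠ y := by rintro rfl; exact hna hyA
          rw [idxOf_cons_self, idxOf_cons_ne _ hay]
          exact Nat.succ_pos _
        | cons _ h' =>
          have hxA : x ∈ A' := h'.subset (by simp)
          have hyA : y ∈ A' := h'.subset (by simp)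
          rw [idxOf_cons_ne _ (fun h => hna (by rw [h]; exact hxA)),
            idxOf_cons_ne _ (fun h => hna (by rw [h]; exact hyA))]
          exact Nat.succ_lt_succ (key x y h')
    | D =>
      simp [count_cons] at h1 h2
      match C, h2, h3, hnd with
      | [], h2, h3, hnd =>
        exfalso
        have := h3 1
        simp [count_cons] at this
      | c :: C', h2, h3, hnd =>
        have hbld : bld (D :: bs) A ((c :: C') ++ A) = c :: bld bs A (C' ++ A) := rfl
        have hnd2 : (c :: (C' ++ A)).Nodup := by rwa [cons_append] at hnd
        have h3' : ∀ i, ((bs.take i).count D ≤ C'.length + (bs.take i).count U) := by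
          intro i
          have := h3 (i + 1)
          simp [count_cons] at this ⊢
          omega
        have key := ih C' A (nodup_cons.mp hnd2).2 h1 (by simp at h2 ⊢; omega) h3'
        have hnc : c ∉ A := fun h => (nodup_cons.mp hnd2).1 (mem_append_right _ h)
        have hxA : x ∈ A := hxy.subset (by simp)
        have hyA : y ∈ A := hxy.subset (by simp)
        rw [hbld, idxOf_cons_ne _ (fun h => hnc (by rw [h]; exact hxA)),
          idxOf_cons_ne _ (fun h => hnc (by rw [h]; exact hyA))]
        exact Nat.succ_lt_succ (key x y hxy)

end lemmas

section rec

variable {α : Type*}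

lemma pair_sublist_append_singleton {x y c : α} : ∀ {l : List α},
    [x, y] <+ l ++ [c] → [x, y] <+ l ∨ (y = c ∧ x ∈ l) := by
  intro l
  induction l with
  | nil =>
    intro hs
    have := hs.length_le
    simp at this
  | cons d t ih =>
    intro hs
    cases hs with
    | cons_cons _ h' =>
      -- here d = x
      have : y ∈ t ++ [c] := singleton_sublist.mp h'
      rcases mem_append.mp this with h | h
      · exact Or.inl ((singleton_sublist.mpr h).cons₂ _)
      · simp at h
        exact Or.inr ⟨h, mem_cons_self⟩
    | cons _ h' =>
      rcases ih h' with h | ⟨h1, h2⟩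
      · exact Or.inl (h.cons d)
      · exact Or.inr ⟨h1, mem_cons_of_mem d h2⟩

lemma rec_main [DecidableEq α] : ∀ (w C A : List α),
    (C ++ A).Nodup →
    (∀ a, w.count a = C.count a + 2 * A.count a) →
    (∀ x y, [x, y] <+ A → w.idxOf x < w.idxOf y) →
    (∀ x y : α, x ≠ y → ¬ ([x, y, y, x] <+ w)) →
    (∀ x y, [x, y] <+ C → w.idxOf x < w.idxOf y) →
    (∀ x ∈ C, ∀ y ∈ A, ¬ ([y, y, x] <+ w)) →
    ∃ bs : List DyckStep, w = bld bs A (C ++ A) ∧ bs.count U = A.length ∧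
      bs.count D = C.length + A.length ∧
      ∀ i, (bs.take i).count D ≤ C.length + (bs.take i).count U := by
  intro w
  induction w with
  | nil =>
    intro C A hnd hcnt _ _ _ _
    have hC : C = [] := by
      cases C with
      | nil => rfl
      | cons c C' => exfalso; have := hcnt c; simp [count_cons] at this; omega
    have hA : A = [] := by
      cases A with
      | nil => rfl
      | cons a A' => exfalso; have := hcnt a; simp [count_cons] at this
    subst hC; subst hA
    exact ⟨[], rfl, rfl, rfl, fun i => by simp⟩
  | cons c w' ih =>
    intro C A hnd hcnt hO hN1 hN2 hN3
    have hndC : C.Nodup := (nodup_append.mp hnd).1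
    have hndA : A.Nodup := (nodup_append.mp hnd).2.1
    have hdisj : C.Disjoint A := disjoint_of_nodup_append hnd
    have hmem : c ∈ C ∨ c ∈ A := by
      by_contra hcon
      push_neg at hcon
      have h0 := hcnt c
      rw [count_eq_zero_of_not_mem hcon.1, count_eq_zero_of_not_mem hcon.2] at h0
      simp [count_cons] at h0
    rcases hmem with hcC | hcA
    · -- CLOSE step
      obtain ⟨c₀, C', rfl⟩ : ∃ c₀ C', C = c₀ :: C' := by
        cases C with
        | nil => simp at hcC
        | cons c₀ C' => exact ⟨c₀, C', rfl⟩
      have hc0 : c₀ = c := by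
        by_contra hne
        have hcC' : c ∈ C' := by
          rcases mem_cons.mp hcC with h | h
          · exact absurd h.symm hne
          · exact h
        have h0 := hN2 c₀ c ((singleton_sublist.mpr hcC').cons₂ c₀)
        rw [idxOf_cons_self] at h0
        omega
      subst hc0
      have hnd1 : (c₀ :: (C' ++ A)).Nodup := by simpa using hnd
      have hcnotin : c₀ ∉ C' ++ A := (nodup_cons.mp hnd1).1
      have hnd' : (C' ++ A).Nodup := (nodup_cons.mp hnd1).2
      have lift : ∀ z, z ≠ c₀ → (c₀ :: w').idxOf z = w'.idxOf z + 1 := by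
        intro z hz
        rw [idxOf_cons_ne _ (fun h => hz h.symm)]
      have hcnt' : ∀ a, w'.count a = C'.count a + 2 * A.count a := by
        intro a
        have h0 := hcnt a
        by_cases hac : a = c₀
        · subst hac
          have h1 : A.count a = 0 :=
            count_eq_zero_of_not_mem (fun h => hcnotin (mem_append_right _ h))
          have h2 : C'.count a = 0 :=
            count_eq_zero_of_not_mem (fun h => hcnotin (mem_append_left _ h))
          simp [count_cons, h1, h2] at h0 ⊢
          omega
        · simp [count_cons, hac] at h0 ⊢
          omega
      have hO' : ∀ x y, [x, y] <+ A → w'.idxOf x < w'.idxOf y := by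
        intro x y hs
        have hx : x ∈ A := hs.subset (by simp)
        have hy : y ∈ A := hs.subset (by simp)
        have h0 := hO x y hs
        rw [lift x (fun h => hcnotin (mem_append_right _ (h ▸ hx))),
          lift y (fun h => hcnotin (mem_append_right _ (h ▸ hy)))] at h0
        omega
      have hN1' : ∀ x y : α, x ≠ y → ¬ ([x, y, y, x] <+ w') :=
        fun x y hxy hs => hN1 x y hxy (hs.cons c₀)
      have hN2' : ∀ x y, [x, y] <+ C' → w'.idxOf x < w'.idxOf y := by
        intro x y hs
        have hx : x ∈ C' := hs.subset (by simp)
        have hy : y ∈ C' := hs.subset (by simp)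
        have hndc := nodup_cons.mp (hndC)
        have h0 := hN2 x y (hs.cons c₀)
        rw [lift x (fun h => hndc.1 (h ▸ hx)), lift y (fun h => hndc.1 (h ▸ hy))] at h0
        omega
      have hN3' : ∀ x ∈ C', ∀ y ∈ A, ¬ ([y, y, x] <+ w') :=
        fun x hx y hy hs => hN3 x (mem_cons_of_mem c₀ hx) y hy (hs.cons c₀)
      obtain ⟨bs, hw, hU, hD, hpre⟩ := ih C' A hnd' hcnt' hO' hN1' hN2' hN3'
      refine ⟨D :: bs, ?_, by simpa using hU, by simp [count_cons, hD]; omega, ?_⟩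
      · show c₀ :: w' = bld (D :: bs) A (c₀ :: (C' ++ A))
        show c₀ :: w' = c₀ :: bld bs A (C' ++ A)
        rw [hw]
      · intro i
        cases i with
        | zero => simp
        | succ i =>
          have := hpre i
          simp [take_succ_cons, count_cons] at this ⊢
          omega
    · -- OPEN step
      obtain ⟨a₀, A', rfl⟩ : ∃ a₀ A', A = a₀ :: A' := by
        cases A with
        | nil => simp at hcA
        | cons a₀ A' => exact ⟨a₀, A', rfl⟩
      have ha0 : a₀ = c := by
        by_contra hne
        have hcA' : c ∈ A' := by
          rcases mem_cons.mp hcA with h | h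
          · exact absurd h.symm hne
          · exact h
        have h0 := hO a₀ c ((singleton_sublist.mpr hcA').cons₂ a₀)
        rw [idxOf_cons_self] at h0
        omega
      subst ha0
      have hndA1 := nodup_cons.mp hndA
      have hnotC : a₀ ∉ C := fun h => hdisj h (mem_cons_self)
      have hnd' : ((C ++ [a₀]) ++ A').Nodup := by rwa [← append_cons]
      have lift : ∀ z, z ≠ a₀ → (a₀ :: w').idxOf z = w'.idxOf z + 1 := by
        intro z hz
        rw [idxOf_cons_ne _ (fun h => hz h.symm)]
      have hcnt' : ∀ a, w'.count a = (C ++ [a₀]).count a + 2 * A'.count a := by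
        intro a
        have h0 := hcnt a
        by_cases hac : a = a₀
        · subst hac
          have h1 : A'.count a = 0 := count_eq_zero_of_not_mem hndA1.1
          have h2 : C.count a = 0 := count_eq_zero_of_not_mem hnotC
          simp [count_cons, count_append, h1, h2] at h0 ⊢
          omega
        · simp [count_cons, count_append, hac] at h0 ⊢
          omega
      have hO' : ∀ x y, [x, y] <+ A' → w'.idxOf x < w'.idxOf y := by
        intro x y hs
        have hx : x ∈ A' := hs.subset (by simp)
        have hy : y ∈ A' := hs.subset (by simp)
        have h0 := hO x y (hs.cons a₀)
        rw [lift x (fun h => hndA1.1 (h ▸ hx)), lift y (fun h => hndA1.1 (h ▸ hy))] at h0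
        omega
      have hN1' : ∀ x y : α, x ≠ y → ¬ ([x, y, y, x] <+ w') :=
        fun x y hxy hs => hN1 x y hxy (hs.cons a₀)
      have hcw' : a₀ ∈ w' := by
        have h0 := hcnt' a₀
        have h1 : (C ++ [a₀]).count a₀ = 1 := by
          have h2 : C.count a₀ = 0 := count_eq_zero_of_not_mem hnotC
          simp [count_append, h2]
        rw [← count_pos_iff]
        omega
      have hN2' : ∀ x y, [x, y] <+ C ++ [a₀] → w'.idxOf x < w'.idxOf y := by
        intro x y hs
        rcases pair_sublist_append_singleton hs with hs' | ⟨hya, hxC⟩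
        · have hx : x ∈ C := hs'.subset (by simp)
          have hy : y ∈ C := hs'.subset (by simp)
          have h0 := hN2 x y hs'
          rw [lift x (fun h => hnotC (h ▸ hx)), lift y (fun h => hnotC (h ▸ hy))] at h0
          omega
        · -- y = a₀, x ∈ C : pending x must close before a₀ closes
          rw [hya]
          have hxw' : x ∈ w' := by
            have h0 := hcnt' x
            have h1 : (C ++ [x]).count x ≥ 1 := by
              simp [count_append]
            have hxa : x ≠ a₀ := fun h => hnotC (h ▸ hxC)
            have h2 : (C ++ [a₀]).count x ≥ 1 := by
              have : C.count x ≥ 1 := count_pos_iff.mpr hxC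
              simp [count_append]
              omega
            rw [← count_pos_iff]
            omega
          have hxa : x ≠ a₀ := fun h => hnotC (h ▸ hxC)
          by_contra hge
          push_neg at hge
          have hne : w'.idxOf a₀ ≠ w'.idxOf x :=
            fun h => hxa (((idxOf_inj hcw').mp h).symm)
          have hlt : w'.idxOf a₀ < w'.idxOf x := by omega
          have hsub : [a₀, x] <+ w' := pair_sublist_of_indexOf_lt hcw' hxw' hlt
          exact hN3 x hxC a₀ (mem_cons_self) (hsub.cons₂ a₀)
      have hN3' : ∀ x ∈ C ++ [a₀], ∀ y ∈ A', ¬ ([y, y, x] <+ w') := by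
        intro x hx y hy hs
        rcases mem_append.mp hx with hx' | hx'
        · exact hN3 x hx' y (mem_cons_of_mem a₀ hy) (hs.cons a₀)
        · simp at hx'
          rw [hx'] at hs
          exact hN1 a₀ y (by rintro rfl; exact hndA1.1 hy) (hs.cons₂ a₀)
      obtain ⟨bs, hw, hU, hD, hpre⟩ := ih (C ++ [a₀]) A' hnd' hcnt' hO' hN1' hN2' hN3'
      refine ⟨U :: bs, ?_, by simp [count_cons]; omega, ?_, ?_⟩
      · show a₀ :: w' = bld (U :: bs) (a₀ :: A') (C ++ a₀ :: A')
        show a₀ :: w' = a₀ :: bld bs A' (C ++ a₀ :: A')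
        rw [hw, append_assoc, singleton_append]
      · simp [count_cons, hD]
        omega
      · intro i
        cases i with
        | zero => simp
        | succ i =>
          have := hpre i
          simp [take_succ_cons, count_cons] at this ⊢
          omega

end rec

section inj

variable {α : Type*}

lemma bld_inj : ∀ (bs bs' : List DyckStep) (C A : List α),
    (C ++ A).Nodup →
    bs.count U = A.length → bs.count D = C.length + A.length →
    bs'.count U = A.length → bs'.count D = C.length + A.length →
    (∀ i, (bs.take i).count D ≤ C.length + (bs.take i).count U) →
    (∀ i, (bs'.take i).count D ≤ C.length + (bs'.take i).count U) →
    bld bs A (C ++ A) = bld bs' A (C ++ A) → bs = bs' := by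
  intro bs
  induction bs with
  | nil =>
    intro bs' C A _ h1 h2 h1' h2' _ _ _
    simp at h1 h2
    have : bs'.length = 0 := by rw [dyck_length, h1', h2']; omega
    exact (eq_nil_of_length_eq_zero this).symm
  | cons s bs ih =>
    intro bs' C A hnd h1 h2 h1' h2' h3 h3' heq
    cases bs' with
    | nil =>
      exfalso
      simp at h1' h2'
      cases s <;> simp [count_cons] at h1 h2 <;> omega
    | cons s' bs' =>
      have hCne : ∀ (t : List DyckStep), (D :: t).count D = C.length + A.length →
          (∀ i, ((D :: t).take i).count D ≤ C.length + ((D :: t).take i).count U) →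
          C ≠ [] := by
        intro t _ hpre hC
        subst hC
        have := hpre 1
        simp [count_cons] at this
      have hAne : ∀ (t : List DyckStep), (U :: t).count U = A.length → A ≠ [] := by
        intro t hu hA
        subst hA
        simp [count_cons] at hu
      cases s with
      | U =>
        obtain ⟨a, A', rfl⟩ : ∃ a A', A = a :: A' := by
          rcases exists_cons_of_ne_nil (hAne bs h1) with ⟨a, A', h⟩
          exact ⟨a, A', h⟩
        cases s' with
        | U =>
          have heq' : bld bs A' ((C ++ [a]) ++ A') = bld bs' A' ((C ++ [a]) ++ A') := by
            have e : (C ++ [a]) ++ A' = C ++ a :: A' := by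
              rw [append_assoc, singleton_append]
            rw [e]
            exact cons_injective.eq_iff.mp heq
          have hnd' : ((C ++ [a]) ++ A').Nodup := by rwa [← append_cons]
          have := ih bs' (C ++ [a]) A' hnd'
            (by simp [count_cons] at h1 ⊢; omega)
            (by simp [count_cons] at h2 ⊢; omega)
            (by simp [count_cons] at h1' ⊢; omega)
            (by simp [count_cons] at h2' ⊢; omega)
            (by intro i; have := h3 (i + 1); simp [count_cons, take_succ_cons] at this ⊢; omega)
            (by intro i; have := h3' (i + 1); simp [count_cons, take_succ_cons] at this ⊢; omega)
            heq'
          rw [this]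
        | D =>
          exfalso
          obtain ⟨c, C', rfl⟩ : ∃ c C', C = c :: C' := by
            rcases exists_cons_of_ne_nil (hCne bs' h2' h3') with ⟨c, C', h⟩
            exact ⟨c, C', h⟩
          have hac : a = c := by
            have e1 : bld (U :: bs) (a :: A') ((c :: C') ++ a :: A') =
                a :: bld bs A' ((c :: C') ++ a :: A') := rfl
            have e2 : bld (D :: bs') (a :: A') ((c :: C') ++ a :: A') =
                c :: bld bs' (a :: A') (C' ++ a :: A') := rfl
            rw [e1, e2] at heq
            exact (cons_eq_cons.mp heq).1
          rcases nodup_append.mp hnd with ⟨_, _, hdisj⟩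
          exact hdisj c mem_cons_self a mem_cons_self hac.symm
      | D =>
        obtain ⟨c, C', rfl⟩ : ∃ c C', C = c :: C' := by
          rcases exists_cons_of_ne_nil (hCne bs h2 h3) with ⟨c, C', h⟩
          exact ⟨c, C', h⟩
        cases s' with
        | U =>
          exfalso
          obtain ⟨a, A', rfl⟩ : ∃ a A', A = a :: A' := by
            rcases exists_cons_of_ne_nil (hAne bs' h1') with ⟨a, A', h⟩
            exact ⟨a, A', h⟩
          have hac : c = a := by
            have e1 : bld (D :: bs) (a :: A') ((c :: C') ++ a :: A') =
                c :: bld bs (a :: A') (C' ++ a :: A') := rfl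
            have e2 : bld (U :: bs') (a :: A') ((c :: C') ++ a :: A') =
                a :: bld bs' A' ((c :: C') ++ a :: A') := rfl
            rw [e1, e2] at heq
            exact (cons_eq_cons.mp heq).1
          rcases nodup_append.mp hnd with ⟨_, _, hdisj⟩
          exact hdisj c mem_cons_self a mem_cons_self hac
        | D =>
          have heq' : bld bs A (C' ++ A) = bld bs' A (C' ++ A) :=
            cons_injective.eq_iff.mp heq
          have hnd' : (C' ++ A).Nodup := by
            rw [cons_append] at hnd
            exact (nodup_cons.mp hnd).2
          have := ih bs' C' A hnd'
            (by simpa using h1)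
            (by simp [count_cons] at h2 ⊢; omega)
            (by simpa using h1')
            (by simp [count_cons] at h2' ⊢; omega)
            (by intro i; have := h3 (i + 1); simp [count_cons, take_succ_cons] at this ⊢; omega)
            (by intro i; have := h3' (i + 1); simp [count_cons, take_succ_cons] at this ⊢; omega)
            heq'
          rw [this]

end inj

lemma pair_sublist_finRange {k : ℕ} {x y : Fin k} (h : x < y) : [x, y] <+ finRange k :=
  sorted_pair_sublist (pairwise_lt_finRange k) (mem_finRange x) (mem_finRange y) h
    (lt_asymm h) (lt_irrefl x)

lemma lt_of_pair_sublist_finRange {k : ℕ} {x y : Fin k} (hs : [x, y] <+ finRange k) : x < y := by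
  have hp : ([x, y] : List (Fin k)).Pairwise (· < ·) := (pairwise_lt_finRange k).sublist hs
  exact (pairwise_cons.mp hp).1 y (mem_singleton_self y)

theorem canonical_shuffle_square_characterization (k : ℕ) :
    (∀ W : List (Fin k), Canonical W → (IsShuffleSquare W ↔ ¬ HasXYYX W)) ∧
    {W : List (Fin k) | Canonical W ∧ IsShuffleSquare W}.ncard =
      (2 * k).choose k / (k + 1) := by
  classical
  have hrec : ∀ W : List (Fin k), Canonical W → ¬ HasXYYX W →
      ∃ bs : List DyckStep, W = bld bs (finRange k) (finRange k) ∧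
        bs.count U = k ∧ bs.count D = k ∧
        ∀ i, (bs.take i).count D ≤ (bs.take i).count U := by
    intro W hc hX
    obtain ⟨hlen, hcount, hord⟩ := hc
    obtain ⟨bs, hw, hU, hD, hpre⟩ := rec_main W [] (finRange k)
      (by simpa using nodup_finRange k)
      (fun a => by
        have h1 : (finRange k).count a = 1 :=
          count_eq_one_of_mem (nodup_finRange k) (mem_finRange a)
        simp [h1, hcount a])
      (fun x y hs => hord x y (lt_of_pair_sublist_finRange hs))
      (fun x y hxy hs => hX ((hasXYYX_iff W).mpr ⟨x, y, hxy, hs⟩))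
      (fun x y hs => by simp at hs)
      (fun x hx => by simp at hx)
    exact ⟨bs, by simpa using hw, by simpa using hU, by simpa using hD,
      fun i => by simpa using hpre i⟩
  have hiff : ∀ W : List (Fin k), Canonical W → (IsShuffleSquare W ↔ ¬ HasXYYX W) := by
    intro W hc
    constructor
    · rintro ⟨V, hV⟩ hX
      rw [hasXYYX_iff] at hX
      obtain ⟨x, y, hxy, hsub⟩ := hX
      exact no_shuffle_xyyx hV hxy (hc.2.1 x) (hc.2.1 y) hsub
    · intro hX
      obtain ⟨bs, hw, hU, hD, hpre⟩ := hrec W hc hX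
      exact ⟨finRange k, by
        rw [hw]
        exact bld_interleave bs _ _ (by simpa using hU) (by simpa using hD)⟩
  refine ⟨hiff, ?_⟩
  have him : {W : List (Fin k) | Canonical W ∧ IsShuffleSquare W} =
      (fun Dw : DyckWord => bld Dw.toList (finRange k) (finRange k)) ''
        {Dw : DyckWord | Dw.semilength = k} := by
    ext W
    simp only [Set.mem_setOf_eq, Set.mem_image]
    constructor
    · rintro ⟨hc, hs⟩
      obtain ⟨bs, hw, hU, hD, hpre⟩ := hrec W hc ((hiff W hc).mp hs)
      refine ⟨⟨bs, hU.trans hD.symm, hpre⟩, hU, hw.symm⟩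
    · rintro ⟨Dw, hsemi, rfl⟩
      have hU : Dw.toList.count U = k := hsemi
      have hD : Dw.toList.count D = k := (DyckWord.semilength_eq_count_D.symm.trans hsemi :)
      have h1 : Dw.toList.count U = (finRange k).length := by simpa using hU
      have h2 : Dw.toList.count D = (finRange k).length := by simpa using hD
      have hint := bld_interleave Dw.toList (finRange k) (finRange k) h1 h2
      refine ⟨⟨?_, ?_, ?_⟩, ⟨finRange k, hint⟩⟩
      · rw [bld_length Dw.toList _ _ h1 h2, dyck_length, hU, hD]; omega
      · intro a
        have h3 : (finRange k).count a = 1 :=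
          count_eq_one_of_mem (nodup_finRange k) (mem_finRange a)
        rw [interleave_count_s15 hint a, h3]
      · intro i j hij
        have := bld_indexOf Dw.toList [] (finRange k) (by simpa using nodup_finRange k)
          (by simpa using hU) (by simpa using hD)
          (fun n => by simpa using Dw.count_D_le_count_U n) i j (pair_sublist_finRange hij)
        simpa using this
  rw [him]
  have hinj : Set.InjOn (fun Dw : DyckWord => bld Dw.toList (finRange k) (finRange k))
      {Dw : DyckWord | Dw.semilength = k} := by
    intro D1 h1 D2 h2 heq
    simp only [Set.mem_setOf_eq] at h1 h2
    apply DyckWord.ext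
    refine bld_inj D1.toList D2.toList [] (finRange k) (by simpa using nodup_finRange k)
      (by rw [length_finRange]; exact h1) ?_ (by rw [length_finRange]; exact h2) ?_ ?_ ?_ (by simpa using heq)
    · have := DyckWord.semilength_eq_count_D (p := D1); simp [← this, h1]
    · have := DyckWord.semilength_eq_count_D (p := D2); simp [← this, h2]
    · intro n; simpa using D1.count_D_le_count_U n
    · intro n; simpa using D2.count_D_le_count_U n
  rw [Set.ncard_image_of_injOn hinj]
  have hcard : {Dw : DyckWord | Dw.semilength = k}.ncard = catalan k := by
    rw [← Nat.card_coe_set_eq]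
    have : Nat.card {Dw : DyckWord // Dw.semilength = k} = catalan k := by
      rw [Nat.card_eq_fintype_card, DyckWord.card_dyckWord_semilength_eq_catalan]
    exact this
  rw [hcard, catalan_eq_centralBinom_div]
  rfl
end

section
/- The number of canonical words of length 2k that are shuffle squares equals the k-th Catalan number (1/(k+1))·binom(2k,k). -/
open List DyckStep

namespace ShufSq

variable {α : Type*}

/-- Merge two lists according to a list of Dyck steps. -/
def mrg : List DyckStep → List α → List α → List α
  | U :: d, a :: l₁, l₂ => a :: mrg d l₁ l₂
  | D :: d, l₁, b :: l₂ => b :: mrg d l₁ l₂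
  | _, _, _ => []

lemma mrg_cons_U {d : List DyckStep} {a : α} {l₁ l₂ : List α} :
    mrg (U :: d) (a :: l₁) l₂ = a :: mrg d l₁ l₂ := by
  cases l₂ <;> rfl

lemma mrg_cons_D {d : List DyckStep} {b : α} {l₁ l₂ : List α} :
    mrg (D :: d) l₁ (b :: l₂) = b :: mrg d l₁ l₂ := by
  cases l₁ <;> rfl

lemma interleave_swap {l₁ l₂ l : List α} (h : Interleave l₁ l₂ l) : Interleave l₂ l₁ l := by
  induction h with
  | nil => exact .nil
  | left _ ih => exact .right ih
  | right _ ih => exact .left ih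

lemma interleave_count [DecidableEq α] {l₁ l₂ l : List α} (h : Interleave l₁ l₂ l) (a : α) :
    l.count a = l₁.count a + l₂.count a := by
  induction h with
  | nil => rfl
  | left _ ih => simp [count_cons, ih]; ring
  | right _ ih => simp [count_cons, ih]; ring

lemma interleave_length {l₁ l₂ l : List α} (h : Interleave l₁ l₂ l) :
    l.length = l₁.length + l₂.length := by
  induction h with
  | nil => rfl
  | left _ ih => simp [ih]; ring
  | right _ ih => simp [ih]; ring

lemma interleave_idxOf [DecidableEq α] {U₁ U₂ W : List α} {i j : α}
    (h : Interleave U₁ U₂ W)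
    (h₁ : j ∈ U₁ → i ∈ U₁ ∧ U₁.idxOf i < U₁.idxOf j)
    (h₂ : j ∈ U₂ → i ∈ U₂ ∧ U₂.idxOf i < U₂.idxOf j)
    (hi : i ∈ U₁ ∨ i ∈ U₂) :
    W.idxOf i < W.idxOf j := by
  have hij : i ≠ j := by
    rintro rfl
    rcases hi with hm | hm
    · exact lt_irrefl _ (h₁ hm).2
    · exact lt_irrefl _ (h₂ hm).2
  induction h with
  | nil => simp at hi
  | @left a l₁ l₂ l h ih =>
    rcases eq_or_ne a i with rfl | hai
    · rw [idxOf_cons_self, idxOf_cons_ne _ hij]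
      exact Nat.succ_pos _
    · have haj : a ≠ j := by
        rintro rfl
        have := (h₁ (mem_cons_self)).2
        rw [idxOf_cons_self] at this
        exact Nat.not_lt_zero _ this
      rw [idxOf_cons_ne _ hai, idxOf_cons_ne _ haj]
      have h₁' : j ∈ l₁ → i ∈ l₁ ∧ l₁.idxOf i < l₁.idxOf j := by
        intro hjm
        obtain ⟨him, hlt⟩ := h₁ (mem_cons_of_mem a hjm)
        have him' : i ∈ l₁ := by
          rcases mem_cons.mp him with rfl | hm
          · exact absurd rfl hai
          · exact hm
        refine ⟨him', ?_⟩
        rw [idxOf_cons_ne _ hai, idxOf_cons_ne _ haj] at hlt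
        omega
      have hi' : i ∈ l₁ ∨ i ∈ l₂ := by
        rcases hi with hm | hm
        · left
          rcases mem_cons.mp hm with rfl | hm'
          · exact absurd rfl hai
          · exact hm'
        · right; exact hm
      exact Nat.succ_lt_succ (ih h₁' h₂ hi')
  | @right a l₁ l₂ l h ih =>
    rcases eq_or_ne a i with rfl | hai
    · rw [idxOf_cons_self, idxOf_cons_ne _ hij]
      exact Nat.succ_pos _
    · have haj : a ≠ j := by
        rintro rfl
        have := (h₂ (mem_cons_self)).2
        rw [idxOf_cons_self] at this
        exact Nat.not_lt_zero _ this
      rw [idxOf_cons_ne _ hai, idxOf_cons_ne _ haj]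
      have h₂' : j ∈ l₂ → i ∈ l₂ ∧ l₂.idxOf i < l₂.idxOf j := by
        intro hjm
        obtain ⟨him, hlt⟩ := h₂ (mem_cons_of_mem a hjm)
        have him' : i ∈ l₂ := by
          rcases mem_cons.mp him with rfl | hm
          · exact absurd rfl hai
          · exact hm
        refine ⟨him', ?_⟩
        rw [idxOf_cons_ne _ hai, idxOf_cons_ne _ haj] at hlt
        omega
      have hi' : i ∈ l₁ ∨ i ∈ l₂ := by
        rcases hi with hm | hm
        · left; exact hm
        · right
          rcases mem_cons.mp hm with rfl | hm'
          · exact absurd rfl hai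
          · exact hm'
      exact Nat.succ_lt_succ (ih h₁ h₂' hi')

/-- every interleaving admits a "Dyck-like" merge description. -/
lemma exists_mrg :
    ∀ (n : ℕ) (W U₁ U₂ P : List α), W.length ≤ n → Interleave U₁ U₂ W → U₂ = P ++ U₁ →
    ∃ d : List DyckStep, mrg d U₁ U₂ = W ∧ d.count U = U₁.length ∧ d.count D = U₂.length ∧
      ∀ m, (d.take m).count D ≤ (d.take m).count U + P.length := by
  intro n
  induction n with
  | zero =>
    intro W U₁ U₂ P hn h hP
    cases h with
    | nil => exact ⟨[], rfl, rfl, rfl, by simp⟩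
    | left _ => simp at hn
    | right _ => simp at hn
  | succ n ih =>
    intro W U₁ U₂ P hn h hP
    cases h with
    | nil => exact ⟨[], rfl, rfl, rfl, by simp⟩
    | @left a l₁ l₂ l h' =>
      have hP' : U₂ = (P ++ [a]) ++ l₁ := by rw [hP, List.append_assoc]; rfl
      obtain ⟨d, hd1, hd2, hd3, hd4⟩ := ih l l₁ U₂ (P ++ [a]) (by simp at hn; omega) h' hP'
      refine ⟨U :: d, ?_, ?_, ?_, ?_⟩
      · rw [mrg_cons_U, hd1]
      · simp [hd2]
      · simpa using hd3
      · intro m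
        cases m with
        | zero => simp
        | succ m =>
          have := hd4 m
          simp [take_succ_cons, count_cons] at this ⊢
          omega
    | @right a l₁ l₂ l h' =>
      cases P with
      | nil =>
        simp only [nil_append] at hP
        subst hP
        have h'' : Interleave l₂ (a :: l₂) l := interleave_swap h'
        obtain ⟨d, hd1, hd2, hd3, hd4⟩ := ih l l₂ (a :: l₂) [a] (by simp at hn; omega) h'' rfl
        refine ⟨U :: d, ?_, ?_, ?_, ?_⟩
        · rw [mrg_cons_U, hd1]
        · simp [hd2]
        · simpa using hd3
        · intro m
          cases m with
          | zero => simp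
          | succ m =>
            have := hd4 m
            simp only [take_succ_cons, count_cons] at *
            simp at this ⊢
            omega
      | cons c P' =>
        simp only [cons_append, cons.injEq] at hP
        obtain ⟨rfl, rfl⟩ := hP
        obtain ⟨d, hd1, hd2, hd3, hd4⟩ := ih l U₁ (P' ++ U₁) P' (by simp at hn; omega) h' rfl
        refine ⟨D :: d, ?_, ?_, ?_, ?_⟩
        · rw [mrg_cons_D, hd1]
        · simpa using hd2
        · simp [hd3]
        · intro m
          cases m with
          | zero => simp
          | succ m =>
            have := hd4 m
            simp only [take_succ_cons, count_cons] at *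
            simp at this ⊢
            omega

lemma mrg_interleave :
    ∀ (d : List DyckStep) (l₁ l₂ : List α), d.count U = l₁.length → d.count D = l₂.length →
      Interleave l₁ l₂ (mrg d l₁ l₂) := by
  intro d
  induction d with
  | nil =>
    intro l₁ l₂ h1 h2
    simp only [count_nil] at h1 h2
    obtain rfl := (length_eq_zero_iff.mp h1.symm)
    obtain rfl := (length_eq_zero_iff.mp h2.symm)
    exact .nil
  | cons s d ih =>
    intro l₁ l₂ h1 h2
    cases s with
    | U =>
      cases l₁ with
      | nil => simp at h1
      | cons a l₁ =>
        simp only [count_cons] at h1 h2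
        simp at h1 h2
        exact .left (ih l₁ l₂ (by omega) (by omega))
    | D =>
      cases l₂ with
      | nil => simp at h2
      | cons b l₂ =>
        simp only [count_cons] at h1 h2
        simp at h1 h2
        exact .right (ih l₁ l₂ (by omega) (by omega))

lemma length_eq_count_add_count (d : List DyckStep) : d.length = d.count U + d.count D := by
  induction d with
  | nil => rfl
  | cons s d ih => cases s <;> simp [count_cons, ih] <;> omega

lemma mrg_inj :
    ∀ (d₁ d₂ : List DyckStep) (l₁ l₂ P : List α), l₂.Nodup → l₂ = P ++ l₁ →
      d₁.count U = l₁.length → d₁.count D = l₂.length →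
      d₂.count U = l₁.length → d₂.count D = l₂.length →
      (∀ m, (d₁.take m).count D ≤ (d₁.take m).count U + P.length) →
      (∀ m, (d₂.take m).count D ≤ (d₂.take m).count U + P.length) →
      mrg d₁ l₁ l₂ = mrg d₂ l₁ l₂ → d₁ = d₂ := by
  intro d₁
  induction d₁ with
  | nil =>
    intro d₂ l₁ l₂ P _ _ hU1 hD1 hU2 hD2 _ _ _
    simp only [count_nil] at hU1 hD1
    have : d₂.length = 0 := by
      rw [length_eq_count_add_count, hU2, hD2]; omega
    rw [length_eq_zero_iff.mp this]
  | cons s t₁ ih =>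
    intro d₂ l₁ l₂ P hnd hP hU1 hD1 hU2 hD2 hpf1 hpf2 heq
    cases d₂ with
    | nil =>
      exfalso
      simp only [count_nil] at hU2 hD2
      have : (s :: t₁).length = 0 := by
        rw [length_eq_count_add_count, hU1, hD1]; omega
      simp at this
    | cons s₂ t₂ =>
      have hpf1' := fun m => hpf1 (m + 1)
      have hpf2' := fun m => hpf2 (m + 1)
      simp only [take_succ_cons, count_cons] at hpf1' hpf2'
      cases s with
      | U =>
        have hl₁ : l₁ ≠ [] := by
          intro e; subst e
          simp [count_cons] at hU1
        obtain ⟨a, l₁', rfl⟩ := exists_cons_of_ne_nil hl₁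
        cases s₂ with
        | U =>
          simp only [count_cons, if_pos, if_neg, reduceCtorEq] at hU1 hD1 hU2 hD2
          simp at hU1 hD1 hU2 hD2
          have heq' : mrg t₁ l₁' l₂ = mrg t₂ l₁' l₂ := by
            rw [mrg_cons_U, mrg_cons_U] at heq
            exact (cons.injEq _ _ _ _ ▸ heq).2
          have := ih t₂ l₁' l₂ (P ++ [a]) hnd (by rw [hP, List.append_assoc]; rfl) (by simpa using hU1)
            (by simpa using hD1) (by simpa using hU2) (by simpa using hD2)
            (fun m => by have := hpf1' m; simp at this ⊢; omega)
            (fun m => by have := hpf2' m; simp at this ⊢; omega) heq'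
          rw [this]
        | D =>
          exfalso
          have hp2 := hpf2 1
          simp [count_cons] at hp2
          have hPne : P ≠ [] := by intro e; subst e; simp at hp2
          obtain ⟨c, P', rfl⟩ := exists_cons_of_ne_nil hPne
          subst hP
          rw [show (c :: P') ++ (a :: l₁') = c :: (P' ++ a :: l₁') from rfl,
            mrg_cons_U, mrg_cons_D] at heq
          have hac : a = c := (cons.injEq _ _ _ _ ▸ heq).1
          simp only [cons_append, nodup_cons] at hnd
          exact hnd.1 (by rw [← hac]; simp)
      | D =>
        have hp1 := hpf1 1
        simp [count_cons] at hp1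
        have hPne : P ≠ [] := by intro e; subst e; simp at hp1
        obtain ⟨c, P', rfl⟩ := exists_cons_of_ne_nil hPne
        subst hP
        cases s₂ with
        | U =>
          exfalso
          have hl₁ : l₁ ≠ [] := by
            intro e; subst e
            simp [count_cons] at hU2
          obtain ⟨a, l₁', rfl⟩ := exists_cons_of_ne_nil hl₁
          rw [show (c :: P') ++ (a :: l₁') = c :: (P' ++ a :: l₁') from rfl,
            mrg_cons_U, mrg_cons_D] at heq
          have hac : c = a := (cons.injEq _ _ _ _ ▸ heq).1
          simp only [cons_append, nodup_cons] at hnd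
          exact hnd.1 (by rw [hac]; simp)
        | D =>
          simp only [count_cons] at hU1 hD1 hU2 hD2
          simp at hU1 hD1 hU2 hD2
          have heq' : mrg t₁ l₁ (P' ++ l₁) = mrg t₂ l₁ (P' ++ l₁) := by
            rw [show (c :: P') ++ l₁ = c :: (P' ++ l₁) from rfl, mrg_cons_D, mrg_cons_D] at heq
            exact (cons.injEq _ _ _ _ ▸ heq).2
          have := ih t₂ l₁ (P' ++ l₁) P' (by simpa using hnd.of_cons) rfl
            (by simpa using hU1) (by simp at hD1 ⊢; omega)
            (by simpa using hU2) (by simp at hD2 ⊢; omega)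
            (fun m => by have := hpf1' m; simp at this ⊢; omega)
            (fun m => by have := hpf2' m; simp at this ⊢; omega) heq'
          rw [this]

end ShufSq

theorem count_canonical_shuffle_squares (k : ℕ) :
    {W : List (Fin k) | W.length = 2 * k ∧ (∀ a : Fin k, W.count a = 2) ∧
      (∀ i j : Fin k, i < j → W.idxOf i < W.idxOf j) ∧ IsShuffleSquare W}.ncard =
      (2 * k).choose k / (k + 1) := by
  classical
  set S := {W : List (Fin k) | W.length = 2 * k ∧ (∀ a : Fin k, W.count a = 2) ∧
      (∀ i j : Fin k, i < j → W.idxOf i < W.idxOf j) ∧ IsShuffleSquare W} with hS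
  set R : List (Fin k) := List.finRange k with hR
  have hRlen : R.length = k := List.length_finRange
  have hRcount : ∀ a : Fin k, R.count a = 1 := fun a =>
    List.count_eq_one_of_mem (List.nodup_finRange k) (List.mem_finRange a)
  set F : {p : DyckWord // p.semilength = k} → List (Fin k) :=
    fun p => ShufSq.mrg p.1.toList R R with hF
  have hcountU : ∀ p : {p : DyckWord // p.semilength = k}, p.1.toList.count DyckStep.U = k :=
    fun p => p.2
  have hcountD : ∀ p : {p : DyckWord // p.semilength = k}, p.1.toList.count DyckStep.D = k :=
    fun p => by rw [← p.1.count_U_eq_count_D]; exact p.2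
  have hFint : ∀ p, Interleave R R (F p) := fun p =>
    ShufSq.mrg_interleave _ R R (by rw [hcountU p, hRlen]) (by rw [hcountD p, hRlen])
  -- range F = S
  have hrange : Set.range F = S := by
    ext W
    constructor
    · rintro ⟨p, rfl⟩
      have hint := hFint p
      refine ⟨?_, ?_, ?_, R, hint⟩
      · rw [ShufSq.interleave_length hint, hRlen]; ring
      · intro a; rw [ShufSq.interleave_count hint a, hRcount a]
      · intro i j hij
        refine ShufSq.interleave_idxOf hint ?_ ?_ (Or.inl (List.mem_finRange i))
        all_goals
          intro _
          refine ⟨List.mem_finRange i, ?_⟩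
          rw [hR, List.idxOf_finRange, List.idxOf_finRange]
          exact hij
    · rintro ⟨hlen, hcount, hidx, Uw, hint⟩
      -- each letter appears once in Uw
      have hUcount : ∀ a : Fin k, Uw.count a = 1 := by
        intro a
        have := ShufSq.interleave_count hint a
        rw [hcount a] at this
        omega
      have hUnodup : Uw.Nodup := List.nodup_iff_count_eq_one.mpr fun a _ => hUcount a
      have hperm : Uw ~ R := List.perm_iff_count.mpr fun a => by rw [hUcount a, hRcount a]
      -- Uw is sorted
      have hsorted : Uw.Pairwise (· < ·) := by
        rw [List.pairwise_iff_get]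
        intro i j hij
        by_contra hn
        have hne : Uw.get j ≠ Uw.get i := by
          intro e
          exact absurd ((List.Nodup.get_inj_iff hUnodup).mp e) (by omega)
        have hlt : Uw.get j < Uw.get i := lt_of_le_of_ne (not_lt.mp hn) hne
        have hidxU : Uw.idxOf (Uw.get i) < Uw.idxOf (Uw.get j) := by
          rw [List.get_eq_getElem, List.get_eq_getElem,
            hUnodup.idxOf_getElem, hUnodup.idxOf_getElem]
          exact hij
        have hWlt : W.idxOf (Uw.get i) < W.idxOf (Uw.get j) :=
          ShufSq.interleave_idxOf hint
            (fun _ => ⟨List.get_mem _ _, hidxU⟩)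
            (fun _ => ⟨List.get_mem _ _, hidxU⟩)
            (Or.inl (List.get_mem _ _))
        have := hidx _ _ hlt
        omega
      have hUR : Uw = R := by
        have : IsAntisymm (Fin k) (· < ·) := ⟨fun a b h1 h2 => absurd h1 (asymm h2)⟩
        exact List.Perm.eq_of_pairwise (fun a b _ _ h1 h2 => absurd h1 (asymm h2)) hsorted
          (List.pairwise_lt_finRange k) hperm
      subst hUR
      obtain ⟨d, hd1, hd2, hd3, hd4⟩ :=
        ShufSq.exists_mrg W.length W R R [] le_rfl hint rfl
      refine ⟨⟨⟨d, ?_, ?_⟩, ?_⟩, hd1⟩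
      · rw [hd2, hd3]
      · intro i; simpa using hd4 i
      · show d.count DyckStep.U = k
        rw [hd2, hRlen]
  have hinj : Function.Injective F := by
    intro p q hpq
    have hnd : R.Nodup := List.nodup_finRange k
    have := ShufSq.mrg_inj p.1.toList q.1.toList R R [] hnd rfl
      (by rw [hcountU p, hRlen]) (by rw [hcountD p, hRlen])
      (by rw [hcountU q, hRlen]) (by rw [hcountD q, hRlen])
      (fun m => by simpa using p.1.count_D_le_count_U m)
      (fun m => by simpa using q.1.count_D_le_count_U m) hpq
    exact Subtype.ext (DyckWord.ext this)
  rw [← hrange, ← Set.image_univ, Set.ncard_image_of_injective _ hinj, Set.ncard_univ,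
    Nat.card_eq_fintype_card, DyckWord.card_dyckWord_semilength_eq_catalan,
    catalan_eq_centralBinom_div, Nat.centralBinom]
end

section
/- Every even binary word W admits a factorization W = XVY (with X, Y possibly empty) such that the word V contains exactly half of the 0's of W and exactly half of the 1's of W. (This is the Goldberg–West necklace splitting theorem specialized to two letters: two cuts suffice for a fair splitting of a binary necklace.) -/
private lemma ivt_aux (f : ℕ → ℕ) (hf : ∀ i, f i ≤ f (i+1) + 1 ∧ f (i+1) ≤ f i + 1) :
    ∀ m c, f 0 ≤ c → c ≤ f m → ∃ i ≤ m, f i = c := by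
  intro m
  induction m with
  | zero => intro c h1 h2; exact ⟨0, le_refl 0, by omega⟩
  | succ m ih =>
    intro c h1 h2
    by_cases hc : c ≤ f m
    · obtain ⟨i, hi, he⟩ := ih c h1 hc
      exact ⟨i, hi.trans (Nat.le_succ m), he⟩
    · have := (hf m).2
      exact ⟨m + 1, le_refl _, by omega⟩

private lemma ivt2 (f : ℕ → ℕ) (hf : ∀ i, f i ≤ f (i+1) + 1 ∧ f (i+1) ≤ f i + 1)
    (m c : ℕ) (h : f 0 + f m = 2 * c) : ∃ i ≤ m, f i = c := by
  rcases le_or_gt (f 0) c with h0 | h0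
  · exact ivt_aux f hf m c h0 (by omega)
  · have key : ∃ i ≤ m, (fun i => f (m - i)) i = c := by
      apply ivt_aux
      · intro i
        rcases le_or_gt m i with hmi | hmi
        · simp [Nat.sub_eq_zero_of_le hmi, Nat.sub_eq_zero_of_le (hmi.trans (Nat.le_succ i))]
        · have he : m - i = (m - (i+1)) + 1 := by omega
          simp only [he]
          exact ⟨(hf _).2, (hf _).1⟩
      · simpa using by omega
      · simpa using by omega
    obtain ⟨i, hi, he⟩ := key
    exact ⟨m - i, Nat.sub_le _ _, he⟩

private lemma bool_count_len (l : List Bool) : l.count false + l.count true = l.length := by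
  induction l with
  | nil => simp
  | cons a t ih => cases a <;> simp [List.count_cons] <;> omega

theorem binary_necklace_splitting (W : List Bool) (h : ∀ b : Bool, Even (W.count b)) :
    ∃ X V Y : List Bool, W = X ++ V ++ Y ∧
      2 * V.count false = W.count false ∧ 2 * V.count true = W.count true := by
  obtain ⟨r, hr⟩ := h false
  obtain ⟨s, hs⟩ := h true
  have hlen : W.length = 2 * r + 2 * s := by
    have := bool_count_len W; omega
  set m := r + s with hm
  set c : ℕ → ℕ := fun i => (W.take i).count false with hc
  have hmono : ∀ i j, i ≤ j → c i ≤ c j := fun i j hij =>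
    (List.take_isPrefix_take.mpr (Or.inl hij)).sublist.count_le _
  have hstep : ∀ i, c (i + 1) ≤ c i + 1 := by
    intro i
    have h1 : W.take (i + 1) = W.take i ++ (W.drop i).take 1 := List.take_add ..
    have h2 : ((W.drop i).take 1).count false ≤ 1 := by
      calc ((W.drop i).take 1).count false ≤ ((W.drop i).take 1).length := List.count_le_length ..
        _ ≤ 1 := by simp [List.length_take]
    simp only [hc, h1, List.count_append]
    omega
  have hwin : ∀ i, ((W.drop i).take m).count false + c i = c (i + m) := by
    intro i
    have h1 : W.take (i + m) = W.take i ++ (W.drop i).take m := List.take_add ..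
    simp only [hc, h1, List.count_append]
    omega
  set g : ℕ → ℕ := fun i => c (i + m) - c i with hg
  have hgsum : g 0 + g m = 2 * r := by
    have h0 : c 0 = 0 := by simp [hc]
    have h2m : c (m + m) = 2 * r := by
      have : W.take (m + m) = W := List.take_of_length_le (by omega)
      simp [hc, this, hr]; omega
    have h1 := hmono 0 m (Nat.zero_le _)
    have h2 := hmono m (m + m) (by omega)
    simp only [hg, Nat.zero_add]
    omega
  have hgstep : ∀ i, g i ≤ g (i + 1) + 1 ∧ g (i + 1) ≤ g i + 1 := by
    intro i
    have h1 := hstep i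
    have h2 := hstep (i + m)
    have h3 := hmono i (i + m) (by omega)
    have h4 := hmono (i + 1) (i + 1 + m) (by omega)
    have h5 := hmono i (i + 1) (by omega)
    have h6 := hmono (i + m) (i + m + 1) (by omega)
    have he : i + 1 + m = i + m + 1 := by omega
    simp only [hg, he]
    omega
  obtain ⟨i, him, hgi⟩ := ivt2 g hgstep m r hgsum
  refine ⟨W.take i, (W.drop i).take m, W.drop (i + m), ?_, ?_, ?_⟩
  · have h1 : (W.drop i).take m ++ W.drop (i + m) = W.drop i := by
      rw [← List.drop_drop]
      exact List.take_append_drop ..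
    rw [List.append_assoc, h1, List.take_append_drop]
  · have := hwin i
    have h3 := hmono i (i + m) (by omega)
    have : ((W.drop i).take m).count false = g i := by simp only [hg]; omega
    rw [this, hgi]; omega
  · have hvlen : ((W.drop i).take m).length = m := by
      simp [List.length_take, List.length_drop]
      omega
    have hv := bool_count_len ((W.drop i).take m)
    have := hwin i
    have hcf : ((W.drop i).take m).count false = r := by
      have h3 := hmono i (i + m) (by omega)
      simp only [hg] at hgi
      omega
    omega
end
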